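/- arXiv:2209.01771 — 6 statements merged into one kernel-verified Lean document; each statement's English description precedes it below -/
import Mathlib

section
/- Let G be a connected simple graph with m ≥ 5 edges and maximum degree Δ(G), and let s be a real (or integer) parameter. If Δ(G) ≤ s and s ≥ 2m/3, then q(G) ≤ s + 2. -/
open SimpleGraph

/-- The degree of a vertex (with classical decidability). -/
noncomputable def deg {V : Type*} [Fintype V] (G : SimpleGraph V) (v : V) : ℕ :=
  letI := Classical.decEq V
  letI := Classical.decRel G.Adj
  G.degree v

/-- The signless Laplacian matrix `Q(G) = D(G) + A(G)` of a graph. -/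
noncomputable def signlessLaplacian {V : Type*} [Fintype V] (G : SimpleGraph V) :
    Matrix V V ℝ :=
  letI := Classical.decEq V
  letI := Classical.decRel G.Adj
  Matrix.diagonal (fun v => (G.degree v : ℝ)) + G.adjMatrix ℝ

/-- The `Q`-index of a graph: the largest eigenvalue of its signless Laplacian. -/
noncomputable def qIndex {V : Type*} [Fintype V] (G : SimpleGraph V) : ℝ :=
  sSup {μ : ℝ | ∃ x : V → ℝ, x ≠ 0 ∧ (signlessLaplacian G).mulVec x = μ • x}

/-- The maximum degree `Δ(G)` (with classical decidability). -/
noncomputable def maxDeg {V : Type*} [Fintype V] (G : SimpleGraph V) : ℕ :=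
  letI := Classical.decEq V
  letI := Classical.decRel G.Adj
  G.maxDegree

/-- The number of edges (the size) of a graph. -/
noncomputable def edgeCount {V : Type*} (G : SimpleGraph V) : ℕ := G.edgeSet.ncard

/-- Theorem 2.7(i): if `Δ(G) ≤ s` and `s ≥ 2m/3`, then `q(G) ≤ s + 2`. -/
theorem qIndex_upper_bound_of_maxDegree_le (V : Type) [Fintype V] (G : SimpleGraph V)
    (m : ℕ) (hm : 5 ≤ m) (hconn : G.Connected) (hedge : edgeCount G = m)
    (s : ℝ) (hΔ : (maxDeg G : ℝ) ≤ s) (hs : 2 * (m : ℝ) / 3 ≤ s) :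
    qIndex G ≤ s + 2 := by
  letI := Classical.decEq V
  letI := Classical.decRel G.Adj
  have hm5 : (5:ℝ) ≤ (m:ℝ) := by exact_mod_cast hm
  have hs0 : (0:ℝ) ≤ s + 2 := by linarith
  apply Real.sSup_le _ hs0
  rintro μ ⟨x, hx, heig⟩
  rcases le_or_gt μ 0 with hμ | hμ
  · linarith
  -- there is an edge
  have hEne : G.edgeSet.Nonempty := by
    apply Set.nonempty_of_ncard_ne_zero
    rw [show G.edgeSet.ncard = m from hedge]
    omega
  obtain ⟨e, he⟩ := hEne
  obtain ⟨a, b⟩ := e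
  have hab : G.Adj a b := he
  -- every vertex has a neighbor
  have hadj : ∀ v, ∃ w, G.Adj v w := by
    intro v
    by_cases hva : v = a
    · exact ⟨b, hva ▸ hab⟩
    · obtain ⟨p⟩ := hconn.preconnected v a
      cases p with
      | nil => exact absurd rfl hva
      | cons h _ => exact ⟨_, h⟩
  have hdeg : ∀ v, 0 < G.degree v := by
    intro v
    rw [degree_pos_iff_exists_adj]
    exact hadj v
  have hdegR : ∀ v, (0:ℝ) < (G.degree v : ℝ) := fun v => by exact_mod_cast hdeg v
  -- degree bound by s
  have hΔ' : ∀ u, (G.degree u : ℝ) ≤ s := by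
    intro u
    refine le_trans ?_ hΔ
    have : G.degree u ≤ maxDeg G := G.degree_le_maxDegree u
    exact_mod_cast this
  -- handshake
  have hsum : ∑ v, (G.degree v : ℝ) = 2 * (m:ℝ) := by
    have h1 : G.edgeFinset.card = m := by
      rw [← hedge]; unfold edgeCount
      rw [← coe_edgeFinset, Set.ncard_coe_finset]
    have h2 : ∑ v, G.degree v = 2 * m := by
      rw [G.sum_degrees_eq_twice_card_edges, h1]
    have h3 := congrArg (fun n : ℕ => (n:ℝ)) h2
    push_cast at h3
    simpa using h3
  have hVne : Nonempty V := ⟨a⟩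
  -- pick maximizing vertex
  obtain ⟨v, hv⟩ := Finite.exists_max (fun u => |x u| / (G.degree u : ℝ))
  set t : ℝ := |x v| / (G.degree v : ℝ) with ht_def
  have hxv : |x v| = t * (G.degree v : ℝ) := by
    rw [ht_def, div_mul_cancel₀]
    exact (hdegR v).ne'
  have ht : 0 < t := by
    obtain ⟨u, hu⟩ := Function.ne_iff.mp hx
    have h1 : 0 < |x u| / (G.degree u : ℝ) :=
      div_pos (abs_pos.mpr hu) (hdegR u)
    exact lt_of_lt_of_le h1 (hv u)
  have hxu : ∀ u, |x u| ≤ t * (G.degree u : ℝ) := by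
    intro u
    have := hv u
    rw [div_le_iff₀ (hdegR u)] at this
    simpa [mul_comm] using this
  -- eigen equation at v
  have hv_eq : (G.degree v : ℝ) * x v + ∑ u ∈ G.neighborFinset v, x u = μ * x v := by
    have := congrFun heig v
    simpa [signlessLaplacian, Matrix.add_mulVec, Matrix.mulVec_diagonal,
      adjMatrix_mulVec_apply, Pi.add_apply, Pi.smul_apply, smul_eq_mul] using this
  set d : ℝ := (G.degree v : ℝ) with hd_def
  have hd0 : (0:ℝ) < d := hdegR v
  set S : ℝ := ∑ u ∈ G.neighborFinset v, (G.degree u : ℝ) with hS_def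
  -- main inequality: μ * d ≤ d * d + S
  have hmain : μ * d ≤ d * d + S := by
    have h1 : μ * |x v| ≤ d * |x v| + t * S := by
      calc μ * |x v| = |μ * x v| := by
            rw [abs_mul, abs_of_pos hμ]
        _ = |d * x v + ∑ u ∈ G.neighborFinset v, x u| := by rw [hv_eq]
        _ ≤ |d * x v| + |∑ u ∈ G.neighborFinset v, x u| := abs_add_le _ _
        _ ≤ d * |x v| + ∑ u ∈ G.neighborFinset v, |x u| := by
            gcongr
            · rw [abs_mul, abs_of_pos hd0]
            · exact Finset.abs_sum_le_sum_abs _ _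
        _ ≤ d * |x v| + ∑ u ∈ G.neighborFinset v, t * (G.degree u : ℝ) := by
            gcongr with u hu
            exact hxu u
        _ = d * |x v| + t * S := by rw [Finset.mul_sum]
    rw [hxv] at h1
    -- μ * (t*d) ≤ d*(t*d) + t*S
    have h2 : t * (μ * d) ≤ t * (d * d + S) := by ring_nf; ring_nf at h1; linarith
    exact le_of_mul_le_mul_left h2 ht
  -- bounds on S
  have hS1 : S ≤ d * s := by
    calc S ≤ ∑ _u ∈ G.neighborFinset v, s := Finset.sum_le_sum fun u _ => hΔ' u
      _ = (G.degree v : ℝ) * s := by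
          rw [Finset.sum_const, G.card_neighborFinset_eq_degree]
          simp [nsmul_eq_mul]
  have hS2 : S + d ≤ 2 * (m:ℝ) := by
    have hsub : insert v (G.neighborFinset v) ⊆ Finset.univ := Finset.subset_univ _
    have hnm : v ∉ G.neighborFinset v := G.notMem_neighborFinset_self v
    have h3 : ∑ u ∈ insert v (G.neighborFinset v), (G.degree u : ℝ)
        ≤ ∑ u, (G.degree u : ℝ) :=
      Finset.sum_le_sum_of_subset_of_nonneg hsub fun u _ _ => (hdegR u).le
    rw [Finset.sum_insert hnm] at h3
    rw [hsum] at h3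
    linarith
  have hds : d ≤ s := hΔ' v
  -- case split
  rcases le_or_gt d 2 with hd2 | hd3
  · -- μ*d ≤ d*d + d*s ⇒ μ ≤ d + s ≤ 2 + s
    have : μ * d ≤ (s + 2) * d := by nlinarith
    exact le_of_mul_le_mul_right this hd0
  ·
    have hd3' : (3:ℝ) ≤ d := by
      rw [hd_def] at hd3 ⊢
      have h4 : 2 < G.degree v := by exact_mod_cast hd3
      have h5 : 3 ≤ G.degree v := h4
      exact_mod_cast h5
    have h2m : 2 * (m:ℝ) ≤ 3 * s := by linarith
    have : μ * d ≤ (s + 2) * d := by nlinarith [mul_nonneg (by linarith : (0:ℝ) ≤ d - 3) (by linarith : (0:ℝ) ≤ s - d)]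
    exact le_of_mul_le_mul_right this hd0
end

section
/- Let G and H be connected simple graphs, each with m ≥ 5 edges, with maximum degrees Δ(G) and Δ(H). If m − 1 ≥ Δ(G) > Δ(H) ≥ 2m/3, then q(G) > q(H). -/
open SimpleGraph

/-!
An eigenvector `x` of `Q(H)` for `μ`, read at a vertex `u` maximising `|x u| / d u`, gives
`μ d_u ≤ d_u² + ∑_{t ∼ u} d_t`. When `2m ≤ 3Δ`, deleting the edges at a vertex `w` of maximum
degree leaves at most `Δ / 2` edges, and counting degrees there shows
`d_v² + ∑_{t ∼ v} d_t ≤ (Δ + 2) d_v` for every `v`; hence `q(H) ≤ Δ(H) + 2`.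

Since `Δ(G) < m` and `G` is connected, some neighbour `a` of a vertex `w` of maximum degree has a
second neighbour `b ≠ w`. The vector equal to `Δ` at `w`, to `1` on the neighbours of `w` and to
`0` elsewhere then has Rayleigh quotient larger than `Δ + 1`, the edge `ab` accounting for the
strict inequality. So `q(G) > Δ(G) + 1 ≥ Δ(H) + 2 ≥ q(H)`.
-/

open Finset Matrix

theorem maxDeg_eq {V : Type*} [Fintype V] (G : SimpleGraph V) [DecidableRel G.Adj] :
    maxDeg G = G.maxDegree := by
  unfold maxDeg
  congr!

theorem edgeCount_eq {V : Type*} (G : SimpleGraph V) [Fintype G.edgeSet] :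
    edgeCount G = #G.edgeFinset :=
  Set.ncard_eq_toFinset_card' _

theorem signlessLaplacian_eq {V : Type*} [Fintype V] [DecidableEq V] (G : SimpleGraph V)
    [DecidableRel G.Adj] :
    signlessLaplacian G = diagonal (fun v => (G.degree v : ℝ)) + G.adjMatrix ℝ := by
  unfold signlessLaplacian
  congr!

namespace Matrix

variable {n : Type*} [Fintype n] [DecidableEq n]

theorem bddAbove_eigenvalues (A : Matrix n n ℝ) :
    BddAbove {μ : ℝ | ∃ x : n → ℝ, x ≠ 0 ∧ A *ᵥ x = μ • x} :=
  (Module.End.finite_hasEigenvalue (toLin' A)).bddAbove.mono fun _ ⟨_, hx, hAx⟩ =>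
    Module.End.hasEigenvalue_of_hasEigenvector ⟨Module.End.mem_eigenspace_iff.mpr hAx, hx⟩

theorem IsHermitian.rayleigh_le_sSup_eigenvalues {A : Matrix n n ℝ} (hA : A.IsHermitian)
    {y : n → ℝ} (hy : y ≠ 0) :
    (y ⬝ᵥ A *ᵥ y) / (y ⬝ᵥ y) ≤ sSup {μ : ℝ | ∃ x : n → ℝ, x ≠ 0 ∧ A *ᵥ x = μ • x} := by
  set T := toEuclideanLin A
  have hT : T.IsSymmetric := isSymmetric_toEuclideanLin_iff.mpr hA
  have : Nontrivial (EuclideanSpace ℝ n) := ⟨⟨WithLp.toLp 2 y, 0, by simpa using hy⟩⟩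
  obtain ⟨x, hx⟩ := hT.hasEigenvalue_iSup_of_finiteDimensional.exists_hasEigenvector
  refine le_trans ?_ (le_csSup (bddAbove_eigenvalues A)
    ⟨x.ofLp, by simpa using hx.2, congrArg WithLp.ofLp hx.apply_eq_smul⟩)
  have hbdd : BddAbove (Set.range fun x : {x : EuclideanSpace ℝ n // x ≠ 0} =>
      RCLike.re (inner ℝ (T x) (x : EuclideanSpace ℝ n)) / ‖(x : EuclideanSpace ℝ n)‖ ^ 2) :=
    ⟨‖LinearMap.toContinuousLinearMap T‖, by
      rintro _ ⟨x, rfl⟩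
      exact (abs_le.mp ((LinearMap.toContinuousLinearMap T).rayleighQuotient_le_norm x)).2⟩
  have key := le_ciSup hbdd ⟨WithLp.toLp 2 y, by simpa using hy⟩
  have hnum : RCLike.re (inner ℝ (T (WithLp.toLp 2 y)) (WithLp.toLp 2 y)) = y ⬝ᵥ A *ᵥ y := by
    simp [T, EuclideanSpace.inner_eq_star_dotProduct]
  have hden : ‖WithLp.toLp 2 y‖ ^ 2 = y ⬝ᵥ y := by
    rw [EuclideanSpace.real_norm_sq_eq]
    simp [dotProduct, sq]
  rw [hnum, hden] at key
  exact key

end Matrix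

section SignlessLaplacian

variable {V : Type*} [Fintype V] (G : SimpleGraph V)

theorem isHermitian_signlessLaplacian : (signlessLaplacian G).IsHermitian := by
  classical
  rw [signlessLaplacian_eq]
  exact (isHermitian_diagonal _).add (isHermitian_iff_isSymm.mpr G.isSymm_adjMatrix)

theorem rayleigh_le_qIndex {y : V → ℝ} (hy : y ≠ 0) :
    (y ⬝ᵥ signlessLaplacian G *ᵥ y) / (y ⬝ᵥ y) ≤ qIndex G := by
  classical
  exact (isHermitian_signlessLaplacian G).rayleigh_le_sSup_eigenvalues hy

variable [DecidableEq V] [DecidableRel G.Adj]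

theorem signlessLaplacian_mulVec_apply (x : V → ℝ) (v : V) :
    (signlessLaplacian G *ᵥ x) v = G.degree v * x v + ∑ t ∈ G.neighborFinset v, x t := by
  rw [signlessLaplacian_eq, add_mulVec, Pi.add_apply, mulVec_diagonal, adjMatrix_mulVec_apply]

theorem eigenvalue_le_of_forall_sq_add_sum_degree_le (hd : ∀ v, 0 < G.degree v) {μ B : ℝ}
    {x : V → ℝ} (hx : x ≠ 0) (hμ : signlessLaplacian G *ᵥ x = μ • x)
    (hB : ∀ v, (G.degree v : ℝ) ^ 2 + ∑ t ∈ G.neighborFinset v, (G.degree t : ℝ) ≤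
      B * G.degree v) :
    μ ≤ B := by
  obtain ⟨v, hv⟩ := Function.ne_iff.mp hx
  obtain ⟨u, -, hu⟩ := exists_max_image univ (fun v => |x v| / G.degree v) ⟨v, mem_univ v⟩
  have hdeg (t : V) : (0 : ℝ) < G.degree t := Nat.cast_pos.mpr (hd t)
  set r := |x u| / G.degree u
  have hr : 0 < r := (div_pos (abs_pos.mpr hv) (hdeg v)).trans_le (hu v (mem_univ v))
  have hxt (t : V) : |x t| ≤ G.degree t * r := by
    rw [mul_comm, ← div_le_iff₀ (hdeg t)]
    exact hu t (mem_univ t)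
  have hxu : |x u| = G.degree u * r := by
    rw [mul_div_cancel₀ _ (hdeg u).ne']
  have heq : (μ - G.degree u) * x u = ∑ t ∈ G.neighborFinset u, x t := by
    have := congrFun hμ u
    rw [signlessLaplacian_mulVec_apply, Pi.smul_apply, smul_eq_mul] at this
    linarith
  have hmain : (μ - G.degree u) * G.degree u * r ≤
      (∑ t ∈ G.neighborFinset u, (G.degree t : ℝ)) * r :=
    calc (μ - G.degree u) * G.degree u * r = (μ - G.degree u) * |x u| := by rw [hxu, mul_assoc]
      _ ≤ |(μ - G.degree u) * x u| := by
          rw [abs_mul]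
          exact mul_le_mul_of_nonneg_right (le_abs_self _) (abs_nonneg _)
      _ ≤ ∑ t ∈ G.neighborFinset u, |x t| := by rw [heq]; exact abs_sum_le_sum_abs _ _
      _ ≤ ∑ t ∈ G.neighborFinset u, (G.degree t : ℝ) * r := sum_le_sum fun t _ => hxt t
      _ = (∑ t ∈ G.neighborFinset u, (G.degree t : ℝ)) * r := by rw [sum_mul]
  have hμu := le_of_mul_le_mul_right hmain hr
  have hBu := hB u
  nlinarith [hdeg u]

theorem qIndex_le_of_forall_sq_add_sum_degree_le (hd : ∀ v, 0 < G.degree v) {B : ℝ}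
    (hB₀ : 0 ≤ B)
    (hB : ∀ v, (G.degree v : ℝ) ^ 2 + ∑ t ∈ G.neighborFinset v, (G.degree t : ℝ) ≤
      B * G.degree v) :
    qIndex G ≤ B :=
  Real.sSup_le (fun _ ⟨_, hx, hμ⟩ => eigenvalue_le_of_forall_sq_add_sum_degree_le G hd hx hμ hB)
    hB₀

end SignlessLaplacian

namespace SimpleGraph

variable {V : Type*} [Fintype V] [DecidableEq V] {G : SimpleGraph V} [DecidableRel G.Adj]
  {v w : V}

theorem neighborFinset_deleteIncidenceSet (hv : v ≠ w) :
    (G.deleteIncidenceSet w).neighborFinset v = (G.neighborFinset v).erase w := by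
  ext t
  simp [deleteIncidenceSet_adj, hv, and_comm]

theorem notMem_neighborFinset_deleteIncidenceSet (v w : V) :
    w ∉ (G.deleteIncidenceSet w).neighborFinset v := by
  simp [deleteIncidenceSet_adj]

theorem degree_le_degree_deleteIncidenceSet_add_one (hv : v ≠ w) :
    G.degree v ≤ (G.deleteIncidenceSet w).degree v + 1 := by
  simp only [← card_neighborFinset_eq_degree, neighborFinset_deleteIncidenceSet hv]
  have := (G.neighborFinset v).pred_card_le_card_erase (a := w)
  omega

theorem sum_degree_le_sum_degree_deleteIncidenceSet_add_card {s : Finset V} (hw : w ∉ s) :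
    ∑ t ∈ s, G.degree t ≤ ∑ t ∈ s, (G.deleteIncidenceSet w).degree t + #s := by
  rw [card_eq_sum_ones, ← sum_add_distrib]
  exact sum_le_sum fun t ht =>
    degree_le_degree_deleteIncidenceSet_add_one (ne_of_mem_of_not_mem ht hw)

theorem sum_degree_neighborFinset_deleteIncidenceSet_le (v w : V) :
    ∑ t ∈ (G.deleteIncidenceSet w).neighborFinset v, G.degree t ≤
      2 * #(G.deleteIncidenceSet w).edgeFinset := by
  set G' := G.deleteIncidenceSet w
  calc ∑ t ∈ G'.neighborFinset v, G.degree t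
      ≤ ∑ t ∈ G'.neighborFinset v, G'.degree t + G'.degree v := by
        simpa using sum_degree_le_sum_degree_deleteIncidenceSet_add_card
          (notMem_neighborFinset_deleteIncidenceSet v w)
    _ = ∑ t ∈ insert v (G'.neighborFinset v), G'.degree t := by
        rw [sum_insert (G'.notMem_neighborFinset_self v), add_comm]
    _ ≤ ∑ t, G'.degree t := sum_le_univ_sum_of_nonneg fun _ => Nat.zero_le _
    _ = 2 * #G'.edgeFinset := G'.sum_degrees_eq_twice_card_edges

theorem sq_add_sum_degree_le (h : 2 * #G.edgeFinset ≤ 3 * G.degree w) (v : V) :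
    G.degree v ^ 2 + ∑ t ∈ G.neighborFinset v, G.degree t ≤ (G.degree w + 2) * G.degree v := by
  have hk : 2 * #(G.deleteIncidenceSet w).edgeFinset ≤ G.degree w := by
    rw [G.card_edgeFinset_deleteIncidenceSet w]
    omega
  obtain rfl | hvw := eq_or_ne v w
  · have hS := sum_degree_le_sum_degree_deleteIncidenceSet_add_card (G := G)
      (G.notMem_neighborFinset_self v)
    have hS' : ∑ t ∈ G.neighborFinset v, (G.deleteIncidenceSet v).degree t ≤
        2 * #(G.deleteIncidenceSet v).edgeFinset :=
      (sum_le_univ_sum_of_nonneg fun _ => Nat.zero_le _).trans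
        (G.deleteIncidenceSet v).sum_degrees_eq_twice_card_edges.le
    rw [card_neighborFinset_eq_degree] at hS
    nlinarith
  have hw := notMem_neighborFinset_deleteIncidenceSet (G := G) v w
  have hN' := neighborFinset_deleteIncidenceSet (G := G) hvw
  have hd' := (G.deleteIncidenceSet w).degree_le_card_edgeFinset v
  have hS₁ := sum_degree_neighborFinset_deleteIncidenceSet_le (G := G) v w
  have hS₂ : ∑ t ∈ (G.deleteIncidenceSet w).neighborFinset v, G.degree t ≤
      (G.deleteIncidenceSet w).degree v * (#(G.deleteIncidenceSet w).edgeFinset + 1) := by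
    rw [← card_neighborFinset_eq_degree, ← smul_eq_mul, ← sum_const]
    exact sum_le_sum fun t ht =>
      (degree_le_degree_deleteIncidenceSet_add_one (ne_of_mem_of_not_mem ht hw)).trans
        (Nat.succ_le_succ ((G.deleteIncidenceSet w).degree_le_card_edgeFinset t))
  by_cases hadj : G.Adj v w
  · have hN : G.neighborFinset v = insert w ((G.deleteIncidenceSet w).neighborFinset v) := by
      rw [hN', insert_erase ((G.mem_neighborFinset v w).mpr hadj)]
    have hdeg : G.degree v = (G.deleteIncidenceSet w).degree v + 1 := by
      rw [← card_neighborFinset_eq_degree, ← card_neighborFinset_eq_degree, hN,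
        card_insert_of_notMem hw]
    rw [hN, sum_insert hw, hdeg]
    -- few neighbours besides `w`: `hS₂` suffices; otherwise use `hS₁` and `hk`
    rcases Nat.lt_or_ge ((G.deleteIncidenceSet w).degree v) 2 with hd | hd
    · nlinarith
    · nlinarith
  · have hN : G.neighborFinset v = (G.deleteIncidenceSet w).neighborFinset v := by
      rw [hN', erase_eq_of_notMem (by simpa using hadj)]
    rw [hN, ← card_neighborFinset_eq_degree, hN, card_neighborFinset_eq_degree]
    nlinarith

theorem exists_adj_adj_ne_of_degree_lt_card_edgeFinset (hconn : G.Connected)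
    (h : G.degree w < #G.edgeFinset) : ∃ a b, G.Adj w a ∧ G.Adj a b ∧ b ≠ w := by
  by_contra! hstar
  have hcover (u : V) : u = w ∨ G.Adj w u := by
    by_contra! hu
    obtain ⟨d, -, hd, hd'⟩ := (hconn w u).some.exists_boundary_dart {u | u = w ∨ G.Adj w u}
      (Or.inl rfl) (by simpa using hu)
    rcases hd with hx | hx
    · exact hd' (Or.inr (hx ▸ d.adj))
    · exact hd' (Or.inl (hstar _ _ hx d.adj))
  rw [← card_incidenceFinset_eq_degree] at h
  obtain ⟨e, he, hew⟩ := exists_mem_notMem_of_card_lt_card h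
  induction e using Sym2.ind with
  | h u v =>
    rw [mem_edgeFinset, mem_edgeSet] at he
    simp only [mem_incidenceFinset, mk'_mem_incidenceSet_iff, he, true_and, not_or] at hew
    rcases hcover u with rfl | hwu
    · exact hew.1 rfl
    · exact hew.2 (hstar u v hwu he).symm

variable (G) in
def starVector (w : V) : V → ℝ :=
  fun v => if v = w then (G.degree w : ℝ) else if G.Adj w v then 1 else 0

theorem starVector_self (w : V) : G.starVector w w = G.degree w := if_pos rfl

theorem starVector_of_adj (h : G.Adj w v) : G.starVector w v = 1 := by
  simp [starVector, h.ne', h]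

theorem starVector_nonneg (w v : V) : 0 ≤ G.starVector w v := by
  unfold starVector
  split_ifs <;> positivity

theorem starVector_eq_zero (hv : v ∉ insert w (G.neighborFinset w)) : G.starVector w v = 0 := by
  simp_all [starVector]

theorem sum_starVector_mul (f : V → ℝ) :
    ∑ v, G.starVector w v * f v = G.degree w * f w + ∑ v ∈ G.neighborFinset w, f v := by
  rw [← sum_subset (subset_univ (insert w (G.neighborFinset w)))
    fun v _ hv => by rw [starVector_eq_zero hv, zero_mul],
    sum_insert (G.notMem_neighborFinset_self w), starVector_self]
  congr 1
  exact sum_congr rfl fun v hv => by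
    rw [starVector_of_adj ((G.mem_neighborFinset w v).mp hv), one_mul]

theorem dotProduct_starVector_self (w : V) :
    G.starVector w ⬝ᵥ G.starVector w = (G.degree w : ℝ) ^ 2 + G.degree w := by
  rw [dotProduct, sum_starVector_mul, starVector_self, sq,
    sum_congr rfl fun v hv => starVector_of_adj ((G.mem_neighborFinset w v).mp hv)]
  simp

theorem signlessLaplacian_mulVec_starVector_self (w : V) :
    (signlessLaplacian G *ᵥ G.starVector w) w = (G.degree w : ℝ) ^ 2 + G.degree w := by
  rw [signlessLaplacian_mulVec_apply, starVector_self, sq,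
    sum_congr rfl fun v hv => starVector_of_adj ((G.mem_neighborFinset w v).mp hv)]
  simp

theorem signlessLaplacian_mulVec_starVector_of_adj (h : G.Adj w v) :
    (signlessLaplacian G *ᵥ G.starVector w) v =
      ∑ t ∈ G.neighborFinset v, (1 + G.starVector w t) := by
  rw [signlessLaplacian_mulVec_apply, starVector_of_adj h, sum_add_distrib]
  simp

theorem degree_add_one_lt_qIndex {a b : V} (hwa : G.Adj w a) (hab : G.Adj a b) (hbw : b ≠ w) :
    (G.degree w : ℝ) + 1 < qIndex G := by
  set y := G.starVector w
  set Δ : ℝ := (G.degree w : ℝ)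
  have hΔ : 0 < Δ := Nat.cast_pos.mpr hwa.degree_pos_left
  have hyw : y w = Δ := starVector_self w
  have hy : y ≠ 0 := fun h => hΔ.ne' (hyw.symm.trans (congrFun h w))
  have hterm (t : V) : 0 ≤ 1 + y t := add_nonneg zero_le_one (starVector_nonneg w t)
  have hnbr (v : V) (hv : G.Adj w v) : 1 + Δ ≤ (signlessLaplacian G *ᵥ y) v := by
    rw [signlessLaplacian_mulVec_starVector_of_adj hv]
    calc 1 + Δ = ∑ t ∈ {w}, (1 + y t) := by rw [sum_singleton, hyw]
      _ ≤ _ := sum_le_sum_of_subset_of_nonneg (by simpa using hv.symm) fun t _ _ => hterm t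
  have ha : 2 + Δ ≤ (signlessLaplacian G *ᵥ y) a := by
    rw [signlessLaplacian_mulVec_starVector_of_adj hwa]
    calc 2 + Δ ≤ ∑ t ∈ {w, b}, (1 + y t) := by
          rw [sum_pair hbw.symm, hyw]
          linarith [starVector_nonneg (G := G) w b]
      _ ≤ _ := sum_le_sum_of_subset_of_nonneg (by simp [insert_subset_iff, hwa.symm, hab])
          fun t _ _ => hterm t
  have hsum : Δ * (1 + Δ) + 1 ≤ ∑ v ∈ G.neighborFinset w, (signlessLaplacian G *ᵥ y) v := by
    have h := single_le_sum (f := fun v => (signlessLaplacian G *ᵥ y) v - (1 + Δ))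
      (fun v hv => sub_nonneg.mpr (hnbr v ((G.mem_neighborFinset w v).mp hv)))
      ((G.mem_neighborFinset w a).mpr hwa)
    rw [sum_sub_distrib, sum_const, card_neighborFinset_eq_degree, nsmul_eq_mul] at h
    linarith
  have hquad : (Δ + 1) * (y ⬝ᵥ y) < y ⬝ᵥ signlessLaplacian G *ᵥ y := by
    rw [dotProduct_starVector_self, dotProduct, sum_starVector_mul,
      signlessLaplacian_mulVec_starVector_self]
    nlinarith
  calc Δ + 1 < (y ⬝ᵥ signlessLaplacian G *ᵥ y) / (y ⬝ᵥ y) := by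
        rw [lt_div_iff₀ (by rw [dotProduct_starVector_self]; positivity)]
        exact hquad
    _ ≤ qIndex G := rayleigh_le_qIndex G hy

end SimpleGraph

theorem qIndex_lt_of_maxDegree_lt_general (m : ℕ)
    (V W : Type) [Fintype V] [Fintype W] (G : SimpleGraph V) (H : SimpleGraph W)
    (hGconn : G.Connected) (hHconn : H.Connected)
    (hGedge : edgeCount G = m) (hHedge : edgeCount H = m)
    (h1 : maxDeg G ≤ m - 1) (h2 : maxDeg H < maxDeg G)
    (h3 : 2 * (m : ℝ) / 3 ≤ (maxDeg H : ℝ)) :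
    qIndex H < qIndex G := by
  classical
  have := hGconn.nonempty
  have := hHconn.nonempty
  obtain ⟨w, hw⟩ := G.exists_maximal_degree_vertex
  obtain ⟨z, hz⟩ := H.exists_maximal_degree_vertex
  rw [maxDeg_eq G, hw] at h1 h2
  rw [maxDeg_eq H, hz] at h2 h3
  rw [edgeCount_eq] at hGedge hHedge
  have hHz : 2 * #H.edgeFinset ≤ 3 * H.degree z := by
    rw [hHedge]
    exact_mod_cast (by linarith : 2 * (m : ℝ) ≤ 3 * H.degree z)
  obtain ⟨u, hzu⟩ := (H.degree_pos_iff_exists_adj z).mp (by omega)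
  have := nontrivial_of_ne z u hzu.ne
  obtain ⟨a, b, hwa, hab, hbw⟩ :=
    exists_adj_adj_ne_of_degree_lt_card_edgeFinset hGconn (by omega : G.degree w < #G.edgeFinset)
  calc qIndex H ≤ H.degree z + 2 :=
        qIndex_le_of_forall_sq_add_sum_degree_le H (hHconn.preconnected.degree_pos_of_nontrivial ·)
          (by positivity) fun v => by exact_mod_cast sq_add_sum_degree_le hHz v
    _ ≤ G.degree w + 1 := by exact_mod_cast (by omega : H.degree z + 2 ≤ G.degree w + 1)
    _ < qIndex G := degree_add_one_lt_qIndex hwa hab hbw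

/-- Corollary 2.10: if `m - 1 ≥ Δ(G) > Δ(H) ≥ 2m/3` for connected graphs `G`, `H` with
`m ≥ 5` edges, then `q(G) > q(H)`. -/
theorem qIndex_lt_of_maxDegree_lt (m : ℕ) (hm : 5 ≤ m)
    (V W : Type) [Fintype V] [Fintype W] (G : SimpleGraph V) (H : SimpleGraph W)
    (hGconn : G.Connected) (hHconn : H.Connected)
    (hGedge : edgeCount G = m) (hHedge : edgeCount H = m)
    (h1 : maxDeg G ≤ m - 1) (h2 : maxDeg H < maxDeg G)
    (h3 : 2 * (m : ℝ) / 3 ≤ (maxDeg H : ℝ)) :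
    qIndex H < qIndex G :=
  qIndex_lt_of_maxDegree_lt_general m V W G H hGconn hHconn hGedge hHedge h1 h2 h3
end

section
/- For n ≥ 7, the Q-index of the graph H_0 is the largest real root of the polynomial φ₂(x,n) = x⁵ − (n+5)·x⁴ + (7n+1)·x³ − (15n−17)·x² + (10n−8)·x − 2n. -/
open SimpleGraph Finset

/-- `graphH0 n` : the unicyclic graph `H_0` on `n` vertices, obtained from the 4-cycle
`0-1-2-3-0` by attaching `n-6` pendant edges (vertices `4,…,n-3`) and a pendant path
`0 — (n-2) — (n-1)` of length 2 at the vertex `0`. -/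
def graphH0 (n : ℕ) : SimpleGraph (Fin n) :=
  SimpleGraph.fromRel (fun u v =>
    (v.val = u.val + 1 ∧ v.val ≤ 3) ∨ (u.val = 0 ∧ v.val = 3) ∨
    (u.val = 0 ∧ 4 ≤ v.val ∧ v.val ≤ n - 2) ∨ (u.val = n - 2 ∧ v.val = n - 1))

section Aux
/-- adjacency as a relation on ℕ values -/
def R (n a b : ℕ) : Prop := a ≠ b ∧
  ((b = a + 1 ∧ b ≤ 3) ∨ (a = 0 ∧ b = 3) ∨ (a = 0 ∧ 4 ≤ b ∧ b ≤ n - 2) ∨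
    (a = n - 2 ∧ b = n - 1) ∨
   (a = b + 1 ∧ a ≤ 3) ∨ (b = 0 ∧ a = 3) ∨ (b = 0 ∧ 4 ≤ a ∧ a ≤ n - 2) ∨
    (b = n - 2 ∧ a = n - 1))

instance {n a b : ℕ} : Decidable (R n a b) := by unfold R; infer_instance

lemma adj_iff {n : ℕ} (u v : Fin n) : (graphH0 n).Adj u v ↔ R n u.val v.val := by
  simp only [graphH0, SimpleGraph.fromRel_adj, R, ne_eq, Fin.ext_iff, or_assoc]

instance {n : ℕ} : DecidableRel (graphH0 n).Adj :=
  fun u v => decidable_of_iff _ (adj_iff u v).symm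

/-- extension of a vector on Fin n to ℕ -/
noncomputable def X {n : ℕ} (x : Fin n → ℝ) (i : ℕ) : ℝ :=
  if h : i < n then x ⟨i, h⟩ else 0

lemma X_val {n : ℕ} (x : Fin n → ℝ) (u : Fin n) : X x u.val = x u := by
  simp [X, u.isLt]

lemma sl_eq {n : ℕ} : signlessLaplacian (graphH0 n) =
    Matrix.diagonal (fun v => (((graphH0 n).degree v : ℕ) : ℝ)) + (graphH0 n).adjMatrix ℝ := by
  rw [signlessLaplacian]
  congr! <;> exact Subsingleton.elim _ _

lemma qmul {n : ℕ} (x : Fin n → ℝ) (v : Fin n) :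
    (signlessLaplacian (graphH0 n)).mulVec x v
    = (∑ i ∈ range n, if R n v.val i then (1:ℝ) else 0) * x v
      + ∑ i ∈ range n, if R n v.val i then X x i else 0 := by
  rw [sl_eq, Matrix.add_mulVec, Pi.add_apply, Matrix.mulVec_diagonal,
    SimpleGraph.adjMatrix_mulVec_apply]
  congr 1
  · congr 1
    rw [← SimpleGraph.card_neighborFinset_eq_degree, SimpleGraph.neighborFinset_eq_filter,
      Finset.card_filter]
    push_cast
    rw [← Fin.sum_univ_eq_sum_range (fun i => if R n v.val i then (1:ℝ) else 0) n]
    exact Finset.sum_congr rfl fun u _ => if_congr (adj_iff v u) rfl rfl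
  · rw [SimpleGraph.neighborFinset_eq_filter, Finset.sum_filter,
      ← Fin.sum_univ_eq_sum_range (fun i => if R n v.val i then X x i else 0) n]
    exact Finset.sum_congr rfl fun u _ => if_congr (adj_iff v u) (X_val x u).symm rfl



lemma sum_split {n : ℕ} (hn : 7 ≤ n) (F : ℕ → ℝ) :
    ∑ i ∈ range n, F i = F 0 + F 1 + F 2 + F 3 + (∑ i ∈ Icc 4 (n-3), F i)
      + F (n-2) + F (n-1) := by
  have h1 : range n = (range 4 ∪ Icc 4 (n-3)) ∪ {n-2, n-1} := by
    ext i; simp [Finset.mem_insert]; omega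
  have d1 : Disjoint (range 4) (Icc 4 (n-3)) := by
    simp [Finset.disjoint_left]; omega
  have d2 : Disjoint (range 4 ∪ Icc 4 (n-3)) ({n-2, n-1} : Finset ℕ) := by
    simp [Finset.disjoint_left, Finset.mem_insert]; omega
  have hne : n - 2 ≠ n - 1 := by omega
  rw [h1, Finset.sum_union d2, Finset.sum_union d1, Finset.sum_pair hne]
  simp [Finset.sum_range_succ]
  ring

lemma L0 {n : ℕ} (hn : 7 ≤ n) (F : ℕ → ℝ)  :
    ∑ i ∈ range n, (if R n 0 i then F i else 0) = F 1 + F 3 + (∑ i ∈ Icc 4 (n-3), F i) + F (n-2) := by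
  rw [sum_split hn (fun i => if R n 0 i then F i else 0)]
  have h0 : ¬ R n 0 0 := by unfold R; omega
  have h1 : R n 0 1 := by unfold R; omega
  have h2 : ¬ R n 0 2 := by unfold R; omega
  have h3 : R n 0 3 := by unfold R; omega
  have h4 : R n 0 (n-2) := by unfold R; omega
  have h5 : ¬ R n 0 (n-1) := by unfold R; omega
  rw [if_neg h0, if_pos h1, if_neg h2, if_pos h3, if_pos h4, if_neg h5]
  rw [Finset.sum_congr rfl (fun i hi => if_pos (by simp only [Finset.mem_Icc] at hi; unfold R; omega))]
  ring
lemma L1 {n : ℕ} (hn : 7 ≤ n) (F : ℕ → ℝ)  :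
    ∑ i ∈ range n, (if R n 1 i then F i else 0) = F 0 + F 2 := by
  rw [sum_split hn (fun i => if R n 1 i then F i else 0)]
  have h0 : R n 1 0 := by unfold R; omega
  have h1 : ¬ R n 1 1 := by unfold R; omega
  have h2 : R n 1 2 := by unfold R; omega
  have h3 : ¬ R n 1 3 := by unfold R; omega
  have h4 : ¬ R n 1 (n-2) := by unfold R; omega
  have h5 : ¬ R n 1 (n-1) := by unfold R; omega
  rw [if_pos h0, if_neg h1, if_pos h2, if_neg h3, if_neg h4, if_neg h5]
  rw [Finset.sum_eq_zero (fun i hi => if_neg (by simp only [Finset.mem_Icc] at hi; unfold R; omega))]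
  ring
lemma L2 {n : ℕ} (hn : 7 ≤ n) (F : ℕ → ℝ)  :
    ∑ i ∈ range n, (if R n 2 i then F i else 0) = F 1 + F 3 := by
  rw [sum_split hn (fun i => if R n 2 i then F i else 0)]
  have h0 : ¬ R n 2 0 := by unfold R; omega
  have h1 : R n 2 1 := by unfold R; omega
  have h2 : ¬ R n 2 2 := by unfold R; omega
  have h3 : R n 2 3 := by unfold R; omega
  have h4 : ¬ R n 2 (n-2) := by unfold R; omega
  have h5 : ¬ R n 2 (n-1) := by unfold R; omega
  rw [if_neg h0, if_pos h1, if_neg h2, if_pos h3, if_neg h4, if_neg h5]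
  rw [Finset.sum_eq_zero (fun i hi => if_neg (by simp only [Finset.mem_Icc] at hi; unfold R; omega))]
  ring
lemma L3 {n : ℕ} (hn : 7 ≤ n) (F : ℕ → ℝ)  :
    ∑ i ∈ range n, (if R n 3 i then F i else 0) = F 0 + F 2 := by
  rw [sum_split hn (fun i => if R n 3 i then F i else 0)]
  have h0 : R n 3 0 := by unfold R; omega
  have h1 : ¬ R n 3 1 := by unfold R; omega
  have h2 : R n 3 2 := by unfold R; omega
  have h3 : ¬ R n 3 3 := by unfold R; omega
  have h4 : ¬ R n 3 (n-2) := by unfold R; omega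
  have h5 : ¬ R n 3 (n-1) := by unfold R; omega
  rw [if_pos h0, if_neg h1, if_pos h2, if_neg h3, if_neg h4, if_neg h5]
  rw [Finset.sum_eq_zero (fun i hi => if_neg (by simp only [Finset.mem_Icc] at hi; unfold R; omega))]
  ring
lemma LP {n : ℕ} (hn : 7 ≤ n) (F : ℕ → ℝ) {p : ℕ} (h4 : 4 ≤ p) (h3 : p ≤ n - 3) :
    ∑ i ∈ range n, (if R n p i then F i else 0) = F 0 := by
  rw [sum_split hn (fun i => if R n p i then F i else 0)]
  have h0 : R n p 0 := by unfold R; omega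
  have h1 : ¬ R n p 1 := by unfold R; omega
  have h2 : ¬ R n p 2 := by unfold R; omega
  have h3 : ¬ R n p 3 := by unfold R; omega
  have h4 : ¬ R n p (n-2) := by unfold R; omega
  have h5 : ¬ R n p (n-1) := by unfold R; omega
  rw [if_pos h0, if_neg h1, if_neg h2, if_neg h3, if_neg h4, if_neg h5]
  rw [Finset.sum_eq_zero (fun i hi => if_neg (by simp only [Finset.mem_Icc] at hi; unfold R; omega))]
  ring
lemma LQ {n : ℕ} (hn : 7 ≤ n) (F : ℕ → ℝ)  :
    ∑ i ∈ range n, (if R n (n-2) i then F i else 0) = F 0 + F (n-1) := by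
  rw [sum_split hn (fun i => if R n (n-2) i then F i else 0)]
  have h0 : R n (n-2) 0 := by unfold R; omega
  have h1 : ¬ R n (n-2) 1 := by unfold R; omega
  have h2 : ¬ R n (n-2) 2 := by unfold R; omega
  have h3 : ¬ R n (n-2) 3 := by unfold R; omega
  have h4 : ¬ R n (n-2) (n-2) := by unfold R; omega
  have h5 : R n (n-2) (n-1) := by unfold R; omega
  rw [if_pos h0, if_neg h1, if_neg h2, if_neg h3, if_neg h4, if_pos h5]
  rw [Finset.sum_eq_zero (fun i hi => if_neg (by simp only [Finset.mem_Icc] at hi; unfold R; omega))]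
  ring
lemma LR {n : ℕ} (hn : 7 ≤ n) (F : ℕ → ℝ)  :
    ∑ i ∈ range n, (if R n (n-1) i then F i else 0) = F (n-2) := by
  rw [sum_split hn (fun i => if R n (n-1) i then F i else 0)]
  have h0 : ¬ R n (n-1) 0 := by unfold R; omega
  have h1 : ¬ R n (n-1) 1 := by unfold R; omega
  have h2 : ¬ R n (n-1) 2 := by unfold R; omega
  have h3 : ¬ R n (n-1) 3 := by unfold R; omega
  have h4 : R n (n-1) (n-2) := by unfold R; omega
  have h5 : ¬ R n (n-1) (n-1) := by unfold R; omega
  rw [if_neg h0, if_neg h1, if_neg h2, if_neg h3, if_pos h4, if_neg h5]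
  rw [Finset.sum_eq_zero (fun i hi => if_neg (by simp only [Finset.mem_Icc] at hi; unfold R; omega))]
  ring

section VertexEq
variable {n : ℕ} (hn : 7 ≤ n) (x : Fin n → ℝ) {v : Fin n}
include hn

lemma eqv0 (hv : v.val = 0) :
    (signlessLaplacian (graphH0 n)).mulVec x v
    = ((n:ℝ) - 3) * x v + (X x 1 + X x 3 + (∑ i ∈ Icc 4 (n-3), X x i) + X x (n-2)) := by
  rw [qmul, hv, L0 hn (X x), L0 hn (fun _ => (1:ℝ))]
  have hc : ∑ i ∈ Icc 4 (n-3), (1:ℝ) = (n:ℝ) - 6 := by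
    rw [Finset.sum_const, Nat.card_Icc]
    have : n - 3 + 1 - 4 = n - 6 := by omega
    rw [this, nsmul_eq_mul, Nat.cast_sub (by omega), mul_one]
    norm_num
  rw [hc]; ring

lemma eqv1 (hv : v.val = 1) :
    (signlessLaplacian (graphH0 n)).mulVec x v = 2 * x v + (X x 0 + X x 2) := by
  rw [qmul, hv, L1 hn (X x), L1 hn (fun _ => (1:ℝ))]; ring

lemma eqv2 (hv : v.val = 2) :
    (signlessLaplacian (graphH0 n)).mulVec x v = 2 * x v + (X x 1 + X x 3) := by
  rw [qmul, hv, L2 hn (X x), L2 hn (fun _ => (1:ℝ))]; ring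

lemma eqv3 (hv : v.val = 3) :
    (signlessLaplacian (graphH0 n)).mulVec x v = 2 * x v + (X x 0 + X x 2) := by
  rw [qmul, hv, L3 hn (X x), L3 hn (fun _ => (1:ℝ))]; ring

lemma eqvP (h4 : 4 ≤ v.val) (h3 : v.val ≤ n - 3) :
    (signlessLaplacian (graphH0 n)).mulVec x v = 1 * x v + X x 0 := by
  rw [qmul, LP hn (X x) h4 h3, LP hn (fun _ => (1:ℝ)) h4 h3]

lemma eqvQ (hv : v.val = n - 2) :
    (signlessLaplacian (graphH0 n)).mulVec x v = 2 * x v + (X x 0 + X x (n-1)) := by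
  rw [qmul, hv, LQ hn (X x), LQ hn (fun _ => (1:ℝ))]; ring

lemma eqvR (hv : v.val = n - 1) :
    (signlessLaplacian (graphH0 n)).mulVec x v = 1 * x v + X x (n-2) := by
  rw [qmul, hv, LR hn (X x), LR hn (fun _ => (1:ℝ))]

end VertexEq

noncomputable def gvec (n : ℕ) (m : ℝ) (i : ℕ) : ℝ :=
  if i = 0 then (m^2-3*m+1)*(m-1)*(m^2-4*m+2)
  else if i = 2 then 2*(m^2-3*m+1)*(m-1)
  else if i ≤ 3 then (m^2-3*m+1)*(m-2)*(m-1)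
  else if i = n-2 then (m-1)*(m-1)*(m^2-4*m+2)
  else if i = n-1 then (m-1)*(m^2-4*m+2)
  else (m^2-3*m+1)*(m^2-4*m+2)

section DirA
variable {n : ℕ} {m : ℝ} (hn : 7 ≤ n)
include hn

lemma g0 : gvec n m 0 = (m^2-3*m+1)*(m-1)*(m^2-4*m+2) := by
  unfold gvec; norm_num
lemma g1 : gvec n m 1 = (m^2-3*m+1)*(m-2)*(m-1) := by
  unfold gvec; norm_num
lemma g2 : gvec n m 2 = 2*(m^2-3*m+1)*(m-1) := by
  unfold gvec; norm_num
lemma g3 : gvec n m 3 = (m^2-3*m+1)*(m-2)*(m-1) := by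
  unfold gvec; norm_num
lemma gP {i : ℕ} (h4 : 4 ≤ i) (h3 : i ≤ n - 3) :
    gvec n m i = (m^2-3*m+1)*(m^2-4*m+2) := by
  unfold gvec
  rw [if_neg (show ¬ (i=0) by omega), if_neg (show ¬ (i=2) by omega),
    if_neg (show ¬ (i≤3) by omega), if_neg (show ¬ (i=n-2) by omega),
    if_neg (show ¬ (i=n-1) by omega)]
lemma gQ : gvec n m (n-2) = (m-1)*(m-1)*(m^2-4*m+2) := by
  unfold gvec
  rw [if_neg (show ¬ (n-2=0) by omega), if_neg (show ¬ (n-2=2) by omega),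
    if_neg (show ¬ (n-2≤3) by omega), if_pos rfl]
lemma gR : gvec n m (n-1) = (m-1)*(m^2-4*m+2) := by
  unfold gvec
  rw [if_neg (show ¬ (n-1=0) by omega), if_neg (show ¬ (n-1=2) by omega),
    if_neg (show ¬ (n-1≤3) by omega), if_neg (show ¬ (n-1=n-2) by omega), if_pos rfl]

lemma construction (hphi : m^5 - ((n:ℝ)+5)*m^4 + (7*(n:ℝ)+1)*m^3 - (15*(n:ℝ)-17)*m^2
      + (10*(n:ℝ)-8)*m - 2*(n:ℝ) = 0) (hm : 4 < m) :
    ∃ x : Fin n → ℝ, x ≠ 0 ∧ (signlessLaplacian (graphH0 n)).mulVec x = m • x := by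
  set x : Fin n → ℝ := fun v => gvec n m v.val with hxdef
  have hX : ∀ i, i < n → X x i = gvec n m i := by
    intro i hi; simp [X, hi, hxdef]
  have hx : ∀ v : Fin n, x v = gvec n m v.val := fun v => rfl
  refine ⟨x, ?_, ?_⟩
  · intro h0
    have : x ⟨n-1, by omega⟩ = 0 := by rw [h0]; rfl
    rw [hx, gR hn] at this
    have h1 : (0:ℝ) < m - 1 := by linarith
    have h2 : (0:ℝ) < m^2-4*m+2 := by nlinarith
    nlinarith [mul_pos h1 h2]
  · funext v
    have hvlt := v.isLt
    have hsmul : (m • x) v = m * x v := rfl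
    have hcase : v.val = 0 ∨ v.val = 1 ∨ v.val = 2 ∨ v.val = 3 ∨
        (4 ≤ v.val ∧ v.val ≤ n-3) ∨ v.val = n-2 ∨ v.val = n-1 := by omega
    rcases hcase with hv | hv | hv | hv | ⟨h4, h3⟩ | hv | hv
    · rw [eqv0 hn x hv, hsmul, hx, hv, g0 hn,
        hX 1 (by omega), hX 3 (by omega), hX (n-2) (by omega), g1 hn, g3 hn, gQ hn]
      have hS : ∑ i ∈ Icc 4 (n-3), X x i
          = ((n:ℝ)-6) * ((m^2-3*m+1)*(m^2-4*m+2)) := by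
        rw [Finset.sum_congr rfl (fun i hi => by
          simp only [Finset.mem_Icc] at hi
          rw [hX i (by omega), gP hn hi.1 hi.2])]
        rw [Finset.sum_const, Nat.card_Icc, nsmul_eq_mul]
        congr 1
        have : n - 3 + 1 - 4 = n - 6 := by omega
        rw [this, Nat.cast_sub (by omega)]; norm_num
      rw [hS]
      linear_combination (-m) * hphi
    · rw [eqv1 hn x hv, hsmul, hx, hv, g1 hn, hX 0 (by omega), hX 2 (by omega), g0 hn, g2 hn]
      ring
    · rw [eqv2 hn x hv, hsmul, hx, hv, g2 hn, hX 1 (by omega), hX 3 (by omega), g1 hn, g3 hn]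
      ring
    · rw [eqv3 hn x hv, hsmul, hx, hv, g3 hn, hX 0 (by omega), hX 2 (by omega), g0 hn, g2 hn]
      ring
    · rw [eqvP hn x h4 h3, hsmul, hx, gP hn h4 h3, hX 0 (by omega), g0 hn]
      ring
    · rw [eqvQ hn x hv, hsmul, hx, hv, gQ hn, hX 0 (by omega), hX (n-1) (by omega), g0 hn, gR hn]
      ring
    · rw [eqvR hn x hv, hsmul, hx, hv, gR hn, hX (n-2) (by omega), gQ hn]
      ring
end DirA

section DirB
variable {n : ℕ} {m : ℝ}

lemma reverse (hn : 7 ≤ n) (hm : 4 < m) (x : Fin n → ℝ) (hx : x ≠ 0)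
    (h : (signlessLaplacian (graphH0 n)).mulVec x = m • x) :
    m^5 - ((n:ℝ)+5)*m^4 + (7*(n:ℝ)+1)*m^3 - (15*(n:ℝ)-17)*m^2
      + (10*(n:ℝ)-8)*m - 2*(n:ℝ) = 0 := by
  by_contra hphi
  set a0 := X x 0 with ha0def
  set a1 := X x 1 with ha1def
  set a2 := X x 2 with ha2def
  set a3 := X x 3 with ha3def
  set s := X x (n-2) with hsdef
  set t := X x (n-1) with htdef
  set S := ∑ i ∈ Icc 4 (n-3), X x i with hSdef
  -- the vertices
  have hxv : ∀ (v : Fin n), x v = X x v.val := fun v => (X_val x v).symm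
  have hsm : ∀ (v : Fin n), (m • x) v = m * x v := fun v => rfl
  -- equations
  have E0 : ((n:ℝ)-3) * a0 + (a1 + a3 + S + s) = m * a0 := by
    have := congrFun h (⟨0, by omega⟩ : Fin n)
    rwa [eqv0 hn x rfl, hsm, hxv] at this
  have E1 : 2 * a1 + (a0 + a2) = m * a1 := by
    have := congrFun h (⟨1, by omega⟩ : Fin n)
    rwa [eqv1 hn x rfl, hsm, hxv] at this
  have E2 : 2 * a2 + (a1 + a3) = m * a2 := by
    have := congrFun h (⟨2, by omega⟩ : Fin n)
    rwa [eqv2 hn x rfl, hsm, hxv] at this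
  have E3 : 2 * a3 + (a0 + a2) = m * a3 := by
    have := congrFun h (⟨3, by omega⟩ : Fin n)
    rwa [eqv3 hn x rfl, hsm, hxv] at this
  have EQ : 2 * s + (a0 + t) = m * s := by
    have := congrFun h (⟨n-2, by omega⟩ : Fin n)
    rwa [eqvQ hn x rfl, hsm, hxv] at this
  have ER : 1 * t + s = m * t := by
    have := congrFun h (⟨n-1, by omega⟩ : Fin n)
    rwa [eqvR hn x rfl, hsm, hxv] at this
  have EP : ∀ i, 4 ≤ i → i ≤ n - 3 → 1 * X x i + a0 = m * X x i := by
    intro i h4 h3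
    have := congrFun h (⟨i, by omega⟩ : Fin n)
    rwa [eqvP hn x h4 h3, hsm, hxv] at this
  -- aggregated pendant sum
  have hS : (m - 1) * S = ((n:ℝ) - 6) * a0 := by
    have : ∀ i ∈ Icc 4 (n-3), (m - 1) * X x i = a0 := by
      intro i hi
      simp only [Finset.mem_Icc] at hi
      have := EP i hi.1 hi.2
      linarith
    calc (m-1) * S = ∑ i ∈ Icc 4 (n-3), (m-1) * X x i := by
          rw [hSdef, Finset.mul_sum]
      _ = ∑ i ∈ Icc 4 (n-3), a0 := Finset.sum_congr rfl this
      _ = ((n:ℝ) - 6) * a0 := by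
          rw [Finset.sum_const, Nat.card_Icc, nsmul_eq_mul]
          congr 1
          have e1 : n - 3 + 1 - 4 = n - 6 := by omega
          rw [e1, Nat.cast_sub (by omega)]; norm_num
  -- eliminate
  have hst : s = (m-1) * t := by linarith
  have hA0 : a0 = (m^2-3*m+1) * t := by linear_combination EQ + (m-2) * ER
  have hA13 : (m^2-4*m+2) * (a1 + a3) = 2*(m-2) * a0 := by
    linear_combination (-(m-2)) * E1 + (-(m-2)) * E3 + (-2) * E2
  have hkey : m * (m^5 - ((n:ℝ)+5)*m^4 + (7*(n:ℝ)+1)*m^3 - (15*(n:ℝ)-17)*m^2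
      + (10*(n:ℝ)-8)*m - 2*(n:ℝ)) * t = 0 := by
    linear_combination (-((m-1)*(m^2-4*m+2))) * E0 + (m-1) * hA13 + (m^2-4*m+2) * hS
      + (((m-1)*(m^2-4*m+2)*((n:ℝ)-3-m) + 2*(m-1)*(m-2) + ((n:ℝ)-6)*(m^2-4*m+2))) * hA0
      + ((m-1)*(m^2-4*m+2)) * hst
  -- conclude t = 0 and then everything vanishes
  have hd : (0:ℝ) < m^2-4*m+2 := by nlinarith
  have ht : t = 0 := by
    rcases mul_eq_zero.mp hkey with h' | h'
    · rcases mul_eq_zero.mp h' with h'' | h''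
      · linarith
      · exact absurd h'' hphi
    · exact h'
  have hs0 : s = 0 := by rw [hst, ht, mul_zero]
  have ha00 : a0 = 0 := by rw [hA0, ht, mul_zero]
  have ha13 : a1 + a3 = 0 := by
    have := hA13
    rw [ha00, mul_zero] at this
    rcases mul_eq_zero.mp this with h' | h'
    · linarith
    · exact h'
  have ha1a3 : a1 = a3 := by
    have : (2 - m) * (a1 - a3) = 0 := by linear_combination E1 - E3
    rcases mul_eq_zero.mp this with h' | h'
    · linarith
    · linarith
  have ha10 : a1 = 0 := by linarith
  have ha30 : a3 = 0 := by linarith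
  have ha20 : a2 = 0 := by
    have : (2 - m) * a2 = 0 := by linear_combination E2 - (ha10) - (ha30)
    rcases mul_eq_zero.mp this with h' | h'
    · linarith
    · exact h'
  apply hx
  funext v
  have hvlt := v.isLt
  have hcase : v.val = 0 ∨ v.val = 1 ∨ v.val = 2 ∨ v.val = 3 ∨
      (4 ≤ v.val ∧ v.val ≤ n-3) ∨ v.val = n-2 ∨ v.val = n-1 := by omega
  have hxz : x v = X x v.val := (X_val x v).symm
  have hgoal : x v = X x v.val := hxz
  show x v = 0
  rcases hcase with hv | hv | hv | hv | ⟨h4, h3⟩ | hv | hv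
  · rw [hgoal, hv]; exact ha00
  · rw [hgoal, hv]; exact ha10
  · rw [hgoal, hv]; exact ha20
  · rw [hgoal, hv]; exact ha30
  · have hE := EP v.val h4 h3
    have h5 : (m-1) * X x v.val = 0 := by
      rw [ha00] at hE; linarith
    rw [hgoal]
    rcases mul_eq_zero.mp h5 with h' | h'
    · exfalso; linarith
    · exact h'
  · rw [hgoal, hv]; exact hs0
  · rw [hgoal, hv]; exact ht
end DirB
end Aux

/-- Lemma 2.4(ii): the `Q`-index of `H_0` is the largest real root of
`φ₂(x,n) = x⁵ - (n+5) x⁴ + (7n+1) x³ - (15n-17) x² + (10n-8) x - 2n`. -/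
theorem qIndex_H0_largest_root (n : ℕ) (hn : 7 ≤ n) :
    IsGreatest {x : ℝ | x ^ 5 - ((n : ℝ) + 5) * x ^ 4 + (7 * (n : ℝ) + 1) * x ^ 3
      - (15 * (n : ℝ) - 17) * x ^ 2 + (10 * (n : ℝ) - 8) * x - 2 * (n : ℝ) = 0}
      (qIndex (graphH0 n)) := by
  have hn7 : (7:ℝ) ≤ (n:ℝ) := by exact_mod_cast hn
  set f : ℝ → ℝ := fun x => x ^ 5 - ((n : ℝ) + 5) * x ^ 4 + (7 * (n : ℝ) + 1) * x ^ 3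
      - (15 * (n : ℝ) - 17) * x ^ 2 + (10 * (n : ℝ) - 8) * x - 2 * (n : ℝ) with hfdef
  set Z : Set ℝ := {x : ℝ | f x = 0} with hZdef
  -- finiteness of the root set
  set p : Polynomial ℝ := Polynomial.X^5 - Polynomial.C ((n:ℝ)+5) * Polynomial.X^4
    + Polynomial.C (7*(n:ℝ)+1) * Polynomial.X^3 - Polynomial.C (15*(n:ℝ)-17) * Polynomial.X^2
    + Polynomial.C (10*(n:ℝ)-8) * Polynomial.X - Polynomial.C (2*(n:ℝ)) with hpdef
  have hev : ∀ y, p.eval y = f y := by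
    intro y; simp [hpdef, hfdef]
  have hdeg : p.natDegree = 5 := by
    rw [hpdef]; compute_degree!
  have hp : p ≠ 0 := by
    intro h0
    rw [h0] at hdeg
    simp at hdeg
  have hZfin : Z.Finite := by
    apply (Polynomial.finite_setOf_isRoot hp).subset
    intro y hy
    simp only [hZdef, Set.mem_setOf_eq] at hy
    simp [Polynomial.IsRoot, hev, hy]
  -- a root in (4, n]
  have hf4 : f 4 < 0 := by
    simp only [hfdef]; nlinarith
  have hfn : 0 < f (n:ℝ) := by
    have key : f (n:ℝ) = 2*(n:ℝ)^3*((n:ℝ)-7) + (n:ℝ)*(27*(n:ℝ)-10) := by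
      simp only [hfdef]; ring
    rw [key]
    have e1 : (0:ℝ) ≤ 2*(n:ℝ)^3*((n:ℝ)-7) := mul_nonneg (by positivity) (by linarith)
    nlinarith
  have hcont : Continuous f := by
    simp only [hfdef]; continuity
  obtain ⟨c, hcmem, hcroot⟩ := intermediate_value_Icc (by linarith : (4:ℝ) ≤ (n:ℝ))
    hcont.continuousOn (⟨le_of_lt hf4, le_of_lt hfn⟩ : (0:ℝ) ∈ Set.Icc (f 4) (f (n:ℝ)))
  have hcZ : c ∈ Z := hcroot
  have hc4 : 4 < c := by
    rcases lt_or_eq_of_le hcmem.1 with h' | h'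
    · exact h'
    · exfalso; rw [← h'] at hcroot; rw [hcroot] at hf4; exact lt_irrefl 0 hf4
  -- the largest root
  have hZne : hZfin.toFinset.Nonempty := ⟨c, hZfin.mem_toFinset.mpr hcZ⟩
  set r : ℝ := hZfin.toFinset.max' hZne with hrdef
  have hrZ : r ∈ Z := hZfin.mem_toFinset.mp (hZfin.toFinset.max'_mem hZne)
  have hrub : ∀ y ∈ Z, y ≤ r := fun y hy =>
    hZfin.toFinset.le_max' y (hZfin.mem_toFinset.mpr hy)
  have hr4 : 4 < r := lt_of_lt_of_le hc4 (hrub c hcZ)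
  -- eigenvalue set
  set ES : Set ℝ := {μ : ℝ | ∃ x : Fin n → ℝ, x ≠ 0 ∧
    (signlessLaplacian (graphH0 n)).mulVec x = μ • x} with hESdef
  have hrES : r ∈ ES := construction hn hrZ hr4
  have hESub : ∀ μ ∈ ES, μ ≤ r := by
    intro μ hμ
    obtain ⟨x, hx, hmx⟩ := hμ
    by_cases hμ4 : μ ≤ 4
    · linarith
    · exact hrub μ (reverse hn (not_le.mp hμ4) x hx hmx)
  have hqr : qIndex (graphH0 n) = r := by
    rw [qIndex]
    exact IsGreatest.csSup_eq ⟨hrES, hESub⟩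
  constructor
  · rw [hqr]; exact hrZ
  · intro y hy
    rw [hqr]
    exact hrub y hy
end

section
/- Let G be a connected simple graph, let q(G) be its Q-index, and let x be a unit eigenvector of Q(G) corresponding to q(G). Then for every vertex u of G, the entry x_u satisfies x_u² ≤ 1 / (1 + (q(G) − d(u))² / d(u)), where d(u) is the degree of u. -/
open SimpleGraph

/-- Lemma 2.5: for a unit eigenvector `x` of `Q(G)` corresponding to `q(G)`, each entry
satisfies `x_u² ≤ 1 / (1 + (q(G) - d(u))² / d(u))`. -/
theorem eigvec_entry_upper_bound (V : Type) [Fintype V] (G : SimpleGraph V)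
    (hconn : G.Connected) (x : V → ℝ)
    (heig : (signlessLaplacian G).mulVec x = qIndex G • x)
    (hunit : ∑ u, x u ^ 2 = 1) (u : V) :
    x u ^ 2 ≤ 1 / (1 + (qIndex G - (deg G u : ℝ)) ^ 2 / (deg G u : ℝ)) := by
  classical
  have hdeg : deg G u = G.degree u := by unfold deg; congr!
  have hQ : signlessLaplacian G
      = Matrix.diagonal (fun v => (G.degree v : ℝ)) + G.adjMatrix ℝ := by
    unfold signlessLaplacian; congr!
  set q := qIndex G with hq
  set d : ℝ := (G.degree u : ℝ) with hd
  rw [hdeg]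
  -- eigen equation at u
  have h1 : d * x u + ∑ v ∈ G.neighborFinset u, x v = q * x u := by
    have h := congrFun heig u
    rw [hQ] at h
    simpa [Matrix.add_mulVec, Matrix.mulVec_diagonal, SimpleGraph.adjMatrix_mulVec_apply,
      Pi.add_apply, Pi.smul_apply, smul_eq_mul] using h
  have hS : ∑ v ∈ G.neighborFinset u, x v = (q - d) * x u := by linarith [h1]; 
  -- Cauchy–Schwarz
  have hCS : ((q - d) * x u) ^ 2 ≤ d * ∑ v ∈ G.neighborFinset u, x v ^ 2 := by
    rw [← hS]
    have h2 := sq_sum_le_card_mul_sum_sq (s := G.neighborFinset u) (f := x)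
    have hcard : ((G.neighborFinset u).card : ℝ) = d := by
      rw [hd]; norm_cast
    calc (∑ v ∈ G.neighborFinset u, x v) ^ 2
        ≤ ((G.neighborFinset u).card : ℝ) * ∑ v ∈ G.neighborFinset u, x v ^ 2 := by
          exact_mod_cast h2
      _ = d * ∑ v ∈ G.neighborFinset u, x v ^ 2 := by rw [hcard]
  -- sum of neighbor squares ≤ 1 - x u ^ 2
  have hsub : G.neighborFinset u ⊆ Finset.univ.erase u := by
    intro v hv
    rw [SimpleGraph.mem_neighborFinset] at hv
    exact Finset.mem_erase.2 ⟨hv.ne', Finset.mem_univ v⟩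
  have hsum : ∑ v ∈ G.neighborFinset u, x v ^ 2 ≤ 1 - x u ^ 2 := by
    have h3 : ∑ v ∈ G.neighborFinset u, x v ^ 2 ≤ ∑ v ∈ Finset.univ.erase u, x v ^ 2 :=
      Finset.sum_le_sum_of_subset_of_nonneg hsub (fun i _ _ => sq_nonneg _)
    have h4 : x u ^ 2 + ∑ v ∈ Finset.univ.erase u, x v ^ 2 = 1 := by
      rw [Finset.add_sum_erase Finset.univ (fun v => x v ^ 2) (Finset.mem_univ u), hunit]
    linarith
  have hxu2 : x u ^ 2 ≤ 1 := by
    have h5 : x u ^ 2 ≤ ∑ v, x v ^ 2 :=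
      Finset.single_le_sum (fun i _ => sq_nonneg (x i)) (Finset.mem_univ u)
    linarith
  have hd0 : (0 : ℝ) ≤ d := by rw [hd]; positivity
  rcases eq_or_lt_of_le hd0 with hzero | hpos
  · rw [← hd, ← hzero]
    simp [hxu2]
  · have hkey : (q - d) ^ 2 * x u ^ 2 ≤ d * (1 - x u ^ 2) := by
      have := mul_le_mul_of_nonneg_left hsum (le_of_lt hpos)
      calc (q - d) ^ 2 * x u ^ 2 = ((q - d) * x u) ^ 2 := by ring
        _ ≤ d * ∑ v ∈ G.neighborFinset u, x v ^ 2 := hCS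
        _ ≤ d * (1 - x u ^ 2) := this
    have hD : (0 : ℝ) < 1 + (q - d) ^ 2 / d := by positivity
    rw [le_div_iff₀ hD]
    have hdiv : (q - d) ^ 2 * x u ^ 2 / d ≤ 1 - x u ^ 2 := by
      rw [div_le_iff₀ hpos]; nlinarith [hkey]
    have : x u ^ 2 * (1 + (q - d) ^ 2 / d) = x u ^ 2 + (q - d) ^ 2 * x u ^ 2 / d := by
      field_simp
    linarith [this ▸ le_refl (x u ^ 2 * (1 + (q - d) ^ 2 / d))]
end

section
/- Let m ≥ 9. Then q(G_{0,3}) < m + 1 = q(K_{1,m}); in particular the star K_{1,m} has strictly larger Q-index than G_{0,3}. -/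
open SimpleGraph

/-- `graphG m g i` : the cycle `0,1,…,g-1` together with `m-g-1` pendant edges at vertex `0`
(the vertices `g,…,m-2`) and one pendant edge at vertex `i` (the vertex `m-1`).
For `i = 0` this is the graph `G_0`: the cycle with `m-g` pendant edges at vertex `0`. -/
def graphG (m g i : ℕ) : SimpleGraph (Fin m) :=
  SimpleGraph.fromRel (fun u v =>
    (v.val = u.val + 1 ∧ v.val ≤ g - 1) ∨
    (u.val = 0 ∧ v.val = g - 1) ∨
    (u.val = 0 ∧ g ≤ v.val ∧ v.val ≤ m - 2) ∨
    (u.val = i ∧ v.val = m - 1))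

/-- `starGraph m` : the star `K_{1,m}` with center `0` and `m` leaves. -/
def starGraph (m : ℕ) : SimpleGraph (Fin (m + 1)) :=
  SimpleGraph.fromRel (fun u v => u.val = 0 ∧ 1 ≤ v.val)

/-! A positive vector `w` with `Q w ≤ c • w` bounds every eigenvalue by `c`: at a coordinate
maximising `|x i| / w i`, an eigenvector `x` gives `|μ| w i ≤ (Q w) i`. In a graph with a universal
vertex, take `w` equal to `a` there and `1` elsewhere. For `K_{1,m}` and `a = m` this `w` is an
eigenvector for `m + 1`; in `G_{0,3}` the other vertices have degree at most 2, and `a = m - 3`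
gives `Q w ≤ (m + 1/2) • w`. -/

open Finset Matrix

section CollatzWielandt

variable {ι : Type*} [Fintype ι] {M : Matrix ι ι ℝ} {w x : ι → ℝ} {μ c : ℝ}

theorem Matrix.exists_abs_mul_le_mulVec (hM : ∀ i j, 0 ≤ M i j) (hw : ∀ i, 0 < w i)
    (hx : x ≠ 0) (hμ : M *ᵥ x = μ • x) : ∃ i, |μ| * w i ≤ (M *ᵥ w) i := by
  obtain ⟨j, hj⟩ := Function.ne_iff.mp hx
  have : Nonempty ι := ⟨j⟩
  obtain ⟨i, hi⟩ := Finite.exists_max fun k => |x k| / w k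
  set t := |x i| / w i
  have ht : 0 < t := (div_pos (abs_pos.mpr hj) (hw j)).trans_le (hi j)
  have hxt : ∀ k, |x k| ≤ t * w k := fun k => (div_le_iff₀ (hw k)).mp (hi k)
  refine ⟨i, le_of_mul_le_mul_left ?_ ht⟩
  have htw : t * w i = |x i| := div_mul_cancel₀ _ (hw i).ne'
  calc t * (|μ| * w i) = |(M *ᵥ x) i| := by
        rw [hμ, Pi.smul_apply, smul_eq_mul, abs_mul, ← htw]; ring
    _ ≤ ∑ k, M i k * |x k| :=
        (abs_sum_le_sum_abs _ _).trans_eq (by simp only [abs_mul, abs_of_nonneg (hM _ _)])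
    _ ≤ ∑ k, M i k * (t * w k) := by gcongr with k; exacts [hM i k, hxt k]
    _ = t * (M *ᵥ w) i := by
        simp only [mulVec, dotProduct, mul_sum]; exact sum_congr rfl fun k _ => by ring

theorem Matrix.le_of_mulVec_le_smul (hM : ∀ i j, 0 ≤ M i j) (hw : ∀ i, 0 < w i)
    (hc : M *ᵥ w ≤ c • w) (hx : x ≠ 0) (hμ : M *ᵥ x = μ • x) : μ ≤ c := by
  obtain ⟨i, hi⟩ := exists_abs_mul_le_mulVec hM hw hx hμ
  have : |μ| * w i ≤ c * w i := hi.trans (hc i)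
  exact (le_abs_self μ).trans (le_of_mul_le_mul_right this (hw i))

end CollatzWielandt

namespace SimpleGraph

variable {V : Type*} [Fintype V] (G : SimpleGraph V)

theorem signlessLaplacian_apply_nonneg (i j : V) : 0 ≤ signlessLaplacian G i j := by
  classical
  unfold signlessLaplacian
  simp only [Matrix.add_apply, diagonal_apply, adjMatrix_apply]
  split_ifs <;> positivity

theorem signlessLaplacian_mulVec_apply [DecidableEq V] [DecidableRel G.Adj] (x : V → ℝ)
    (v : V) :
    (signlessLaplacian G *ᵥ x) v = ∑ u ∈ G.neighborFinset v, (x v + x u) := by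
  have hQ : signlessLaplacian G = diagonal (fun v => (G.degree v : ℝ)) + G.adjMatrix ℝ := by
    unfold signlessLaplacian; congr!
  rw [hQ, add_mulVec, Pi.add_apply, mulVec_diagonal, adjMatrix_mulVec_apply, sum_add_distrib,
    sum_const, card_neighborFinset_eq_degree, nsmul_eq_mul]

variable {G}

theorem qIndex_le_of_mulVec_le {w : V → ℝ} (hw : ∀ v, 0 < w v) {c : ℝ} (hc₀ : 0 ≤ c)
    (hc : signlessLaplacian G *ᵥ w ≤ c • w) : qIndex G ≤ c :=
  Real.sSup_le
    (fun _ ⟨_, hx, hμ⟩ => le_of_mulVec_le_smul G.signlessLaplacian_apply_nonneg hw hc hx hμ) hc₀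

theorem qIndex_eq_of_mulVec_eq [Nonempty V] {w : V → ℝ} (hw : ∀ v, 0 < w v) {c : ℝ}
    (hc : signlessLaplacian G *ᵥ w = c • w) : qIndex G = c := by
  have hw₀ : w ≠ 0 := fun h => (hw (Classical.arbitrary V)).ne' (congrFun h _)
  have hbound :
      ∀ μ ∈ {μ : ℝ | ∃ x : V → ℝ, x ≠ 0 ∧ signlessLaplacian G *ᵥ x = μ • x}, μ ≤ c :=
    fun _ ⟨_, hx, hμ⟩ => le_of_mulVec_le_smul G.signlessLaplacian_apply_nonneg hw hc.le hx hμ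
  exact le_antisymm (csSup_le ⟨c, w, hw₀, hc⟩ hbound) (le_csSup ⟨c, hbound⟩ ⟨w, hw₀, hc⟩)

section UniversalVertex

variable [DecidableEq V] [DecidableRel G.Adj] {c : V} (a : ℝ)

theorem signlessLaplacian_mulVec_update_one_self :
    (signlessLaplacian G *ᵥ Function.update 1 c a) c = G.degree c * (a + 1) := by
  rw [signlessLaplacian_mulVec_apply, ← card_neighborFinset_eq_degree, ← nsmul_eq_mul,
    ← sum_const]
  refine sum_congr rfl fun u hu => ?_
  have hne : u ≠ c := (G.ne_of_adj ((G.mem_neighborFinset _ _).mp hu)).symm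
  rw [Function.update_self, Function.update_of_ne hne, Pi.one_apply]

theorem signlessLaplacian_mulVec_update_one_of_adj {v : V} (hv : G.Adj v c) :
    (signlessLaplacian G *ᵥ Function.update 1 c a) v = a + 2 * G.degree v - 1 := by
  have hcv : c ∈ G.neighborFinset v := (G.mem_neighborFinset _ _).mpr hv
  rw [signlessLaplacian_mulVec_apply, ← sum_erase_add _ _ hcv,
    Function.update_of_ne (G.ne_of_adj hv), Function.update_self, Pi.one_apply]
  have hcard : (#((G.neighborFinset v).erase c) : ℝ) + 1 = G.degree v := by
    rw [← card_neighborFinset_eq_degree, ← card_erase_add_one hcv]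
    push_cast; rfl
  have hsum :
      ∑ u ∈ (G.neighborFinset v).erase c, ((1 : ℝ) + Function.update (1 : V → ℝ) c a u) =
        #((G.neighborFinset v).erase c) * 2 := by
    rw [← nsmul_eq_mul, ← sum_const]
    refine sum_congr rfl fun u hu => ?_
    rw [Function.update_of_ne (ne_of_mem_erase hu), Pi.one_apply]; norm_num
  linear_combination hsum + 2 * hcard

theorem qIndex_starGraph [Nontrivial V] (r : V) : qIndex (starGraph r) = Fintype.card V := by
  set n : ℝ := (Fintype.card V : ℝ)
  have hn : 1 < n := Nat.one_lt_cast.mpr Fintype.one_lt_card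
  have hdeg : ((starGraph r).degree r : ℝ) = n - 1 := by
    rw [degree_starGraph_center, Nat.cast_pred Fintype.card_pos]
  refine qIndex_eq_of_mulVec_eq (w := Function.update 1 r (n - 1)) (fun v => ?_)
    (funext fun v => ?_)
  · rw [Function.update_apply, Pi.one_apply]; split_ifs <;> linarith
  rcases eq_or_ne v r with rfl | hv
  · rw [signlessLaplacian_mulVec_update_one_self, hdeg, Pi.smul_apply, Function.update_self,
      smul_eq_mul]
    ring
  · rw [signlessLaplacian_mulVec_update_one_of_adj _ (starGraph_center_adj' hv.symm),
      degree_starGraph_of_ne_center hv, Pi.smul_apply, Function.update_of_ne hv, Pi.one_apply,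
      smul_eq_mul]
    ring

theorem qIndex_le_of_isUniversal_of_degree_le_two (hc : G.IsUniversal c)
    (hdeg : ∀ v ≠ c, G.degree v ≤ 2) (hV : 7 ≤ Fintype.card V) :
    qIndex G ≤ Fintype.card V + 1 / 2 := by
  set n : ℝ := (Fintype.card V : ℝ)
  have hn : 7 ≤ n := Nat.ofNat_le_cast.mpr hV
  have hdeg_c : (G.degree c : ℝ) = n - 1 := by
    rw [(G.degree_eq_card_sub_one c).mpr hc, Nat.cast_pred (Fintype.card_pos_iff.mpr ⟨c⟩)]
  refine qIndex_le_of_mulVec_le (w := Function.update 1 c (n - 3)) (fun v => ?_) (by linarith)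
    fun v => ?_
  · rw [Function.update_apply, Pi.one_apply]; split_ifs <;> linarith
  rcases eq_or_ne v c with rfl | hv
  · rw [signlessLaplacian_mulVec_update_one_self, hdeg_c, Pi.smul_apply, Function.update_self,
      smul_eq_mul]
    nlinarith
  · have hv2 : (G.degree v : ℝ) ≤ 2 := by exact_mod_cast hdeg v hv
    rw [signlessLaplacian_mulVec_update_one_of_adj _ (hc hv.symm).symm, Pi.smul_apply,
      Function.update_of_ne hv, Pi.one_apply, smul_eq_mul]
    linarith

end UniversalVertex

end SimpleGraph

theorem starGraph_eq_starGraph_zero (m : ℕ) :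
    _root_.starGraph m = SimpleGraph.starGraph 0 := by
  ext u v
  simp only [_root_.starGraph, fromRel_adj, starGraph_adj, Fin.ext_iff, Fin.val_zero]
  omega

section GraphG

variable {m : ℕ} [NeZero m]

theorem graphG_three_zero_adj {u v : Fin m} :
    (graphG m 3 0).Adj u v ↔ u ≠ v ∧ (u = 0 ∨ v = 0 ∨ u.val + v.val = 3) := by
  have := u.isLt; have := v.isLt
  simp only [graphG, fromRel_adj, ne_eq, Fin.ext_iff, Fin.val_zero]
  omega

theorem isUniversal_graphG_three_zero : (graphG m 3 0).IsUniversal 0 := fun _ hv =>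
  graphG_three_zero_adj.mpr ⟨hv, Or.inl rfl⟩

theorem degree_graphG_three_zero_le_two [DecidableRel (graphG m 3 0).Adj] {v : Fin m}
    (hv : v ≠ 0) : (graphG m 3 0).degree v ≤ 2 := by
  have hsub : #(((graphG m 3 0).neighborFinset v).erase 0) ≤ 1 := by
    refine card_le_one.mpr fun a ha b hb => ?_
    simp only [mem_erase, mem_neighborFinset, graphG_three_zero_adj] at ha hb
    simp only [ne_eq, Fin.ext_iff, Fin.val_zero] at ha hb hv ⊢
    omega
  have := pred_card_le_card_erase (s := (graphG m 3 0).neighborFinset v) (a := 0)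
  rw [card_neighborFinset_eq_degree] at this
  omega

end GraphG

/-- From the proof of Theorem 1.4: for `m ≥ 9`, `q(G_{0,3}) < m + 1 = q(K_{1,m})`. -/
theorem qIndex_G03_lt_star (m : ℕ) (hm : 9 ≤ m) :
    qIndex (graphG m 3 0) < (m : ℝ) + 1 ∧ (m : ℝ) + 1 = qIndex (_root_.starGraph m) := by
  classical
  have : NeZero m := ⟨by omega⟩
  have hG : qIndex (graphG m 3 0) ≤ m + 1 / 2 := by
    simpa using qIndex_le_of_isUniversal_of_degree_le_two isUniversal_graphG_three_zero
      (fun _ => degree_graphG_three_zero_le_two) (by rw [Fintype.card_fin]; omega)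
  have : Nontrivial (Fin (m + 1)) := Fin.nontrivial_iff_two_le.mpr (by omega)
  refine ⟨by linarith, ?_⟩
  rw [starGraph_eq_starGraph_zero, qIndex_starGraph, Fintype.card_fin, Nat.cast_succ]
end

section
/- Let m ≥ 6. The Q-index of the bicyclic graph B_2 is the largest real root of the polynomial φ(x) = x³ − (m+2)·x² + (3m−3)·x − 8. -/
open SimpleGraph

/-- `graphB2 m` : two triangles `0-1-2` and `0-3-4` sharing the common vertex `0`,
with `m-6` pendant edges (vertices `5,…,m-2`) attached at the common vertex `0`. -/
def graphB2 (m : ℕ) : SimpleGraph (Fin (m - 1)) :=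
  SimpleGraph.fromRel (fun u v =>
    (u.val = 0 ∧ 1 ≤ v.val) ∨ (u.val = 1 ∧ v.val = 2) ∨ (u.val = 3 ∧ v.val = 4))


/- ### Auxiliary lemmas -/

lemma sl_eq_s19 {V : Type*} [Fintype V] [DecidableEq V] (G : SimpleGraph V)
    [DecidableRel G.Adj] :
    signlessLaplacian G = Matrix.diagonal (fun v => (G.degree v : ℝ)) + G.adjMatrix ℝ := by
  rw [signlessLaplacian]
  congr!

lemma sl_mulVec {V : Type*} [Fintype V] [DecidableEq V] (G : SimpleGraph V)
    [DecidableRel G.Adj] (x : V → ℝ) (v : V) :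
    (signlessLaplacian G).mulVec x v = ∑ u, if G.Adj v u then x v + x u else 0 := by
  rw [sl_eq_s19, Matrix.add_mulVec, Pi.add_apply, Matrix.mulVec_diagonal,
    adjMatrix_mulVec_apply, ← Finset.sum_filter, ← neighborFinset_eq_filter,
    Finset.sum_add_distrib, Finset.sum_const, degree, nsmul_eq_mul]

lemma graphB2_adj (m : ℕ) (u v : Fin (m - 1)) :
    (graphB2 m).Adj u v ↔ u.val ≠ v.val ∧ (u.val = 0 ∨ v.val = 0 ∨
      (u.val = 1 ∧ v.val = 2) ∨ (v.val = 1 ∧ u.val = 2) ∨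
      (u.val = 3 ∧ v.val = 4) ∨ (v.val = 3 ∧ u.val = 4)) := by
  simp only [graphB2, SimpleGraph.fromRel_adj, ne_eq, Fin.ext_iff]
  omega

/-- vertex `k` of `B₂` -/
def vtx (m k : ℕ) (h : k < m - 1) : Fin (m - 1) := ⟨k, h⟩

@[simp] lemma vtx_val (m k : ℕ) (h : k < m - 1) : (vtx m k h).val = k := rfl

lemma adj0 {m : ℕ} (hm : 6 ≤ m) (u : Fin (m-1)) : (graphB2 m).Adj (vtx m 0 (by omega)) u ↔ u ≠ vtx m 0 (by omega) := by
  rw [graphB2_adj]; simp only [vtx_val, ne_eq, Fin.ext_iff, true_and, and_true, false_and, and_false, true_or, or_true, false_or, or_false]; omega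

lemma adj1 {m : ℕ} (hm : 6 ≤ m) (u : Fin (m-1)) : (graphB2 m).Adj (vtx m 1 (by omega)) u ↔
    (u = vtx m 0 (by omega) ∨ u = vtx m 2 (by omega)) := by
  rw [graphB2_adj]; simp only [vtx_val, ne_eq, Fin.ext_iff, true_and, and_true, false_and, and_false, true_or, or_true, false_or, or_false]; omega

lemma adj2 {m : ℕ} (hm : 6 ≤ m) (u : Fin (m-1)) : (graphB2 m).Adj (vtx m 2 (by omega)) u ↔
    (u = vtx m 0 (by omega) ∨ u = vtx m 1 (by omega)) := by
  rw [graphB2_adj]; simp only [vtx_val, ne_eq, Fin.ext_iff, true_and, and_true, false_and, and_false, true_or, or_true, false_or, or_false]; omega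

lemma adj3 {m : ℕ} (hm : 6 ≤ m) (u : Fin (m-1)) : (graphB2 m).Adj (vtx m 3 (by omega)) u ↔
    (u = vtx m 0 (by omega) ∨ u = vtx m 4 (by omega)) := by
  rw [graphB2_adj]; simp only [vtx_val, ne_eq, Fin.ext_iff, true_and, and_true, false_and, and_false, true_or, or_true, false_or, or_false]; omega

lemma adj4 {m : ℕ} (hm : 6 ≤ m) (u : Fin (m-1)) : (graphB2 m).Adj (vtx m 4 (by omega)) u ↔
    (u = vtx m 0 (by omega) ∨ u = vtx m 3 (by omega)) := by
  rw [graphB2_adj]; simp only [vtx_val, ne_eq, Fin.ext_iff, true_and, and_true, false_and, and_false, true_or, or_true, false_or, or_false]; omega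

lemma adjP {m : ℕ} (hm : 6 ≤ m) (v : Fin (m-1)) (hv : ¬ v.val < 5) (u : Fin (m-1)) :
    (graphB2 m).Adj v u ↔ u = vtx m 0 (by omega) := by
  rw [graphB2_adj]; simp only [ne_eq, Fin.ext_iff, vtx_val, true_and, and_true, false_and, and_false, true_or, or_true, false_or, or_false]; omega


lemma sum_ite_ne {n : ℕ} (p : Fin n) (f : Fin n → ℝ) :
    (∑ u, if u ≠ p then f u else 0) = (∑ u, f u) - f p := by
  rw [← Finset.sum_filter, Finset.filter_ne', Finset.sum_erase_eq_sub (Finset.mem_univ p)]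

lemma sum_ite_pair {n : ℕ} {p q : Fin n} (hpq : p ≠ q) (f : Fin n → ℝ) :
    (∑ u, if u = p ∨ u = q then f u else 0) = f p + f q := by
  rw [← Finset.sum_filter]
  have h : Finset.univ.filter (fun u => u = p ∨ u = q) = {p, q} := by
    ext u; simp
  rw [h, Finset.sum_pair hpq]

lemma sum_ite_single {n : ℕ} (p : Fin n) (f : Fin n → ℝ) :
    (∑ u, if u = p then f u else 0) = f p := by simp

lemma sum_decomp {m : ℕ} (hm : 6 ≤ m) (y : Fin (m-1) → ℝ) :
    ∑ u, y u = y (vtx m 0 (by omega)) + y (vtx m 1 (by omega)) + y (vtx m 2 (by omega)) +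
      y (vtx m 3 (by omega)) + y (vtx m 4 (by omega)) +
      ∑ u ∈ Finset.univ.filter (fun u : Fin (m-1) => ¬ u.val < 5), y u := by
  rw [← Finset.sum_filter_add_sum_filter_not Finset.univ (fun u : Fin (m-1) => u.val < 5) y]
  congr 1
  have h : Finset.univ.filter (fun u : Fin (m-1) => u.val < 5) =
      ({vtx m 0 (by omega), vtx m 1 (by omega), vtx m 2 (by omega), vtx m 3 (by omega),
        vtx m 4 (by omega)} : Finset (Fin (m-1))) := by
    ext u
    simp only [Finset.mem_filter, Finset.mem_univ, true_and, Finset.mem_insert,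
      Finset.mem_singleton, Fin.ext_iff, vtx_val]
    omega
  rw [h, Finset.sum_insert (by simp [Fin.ext_iff]),
    Finset.sum_insert (by simp [Fin.ext_iff]),
    Finset.sum_insert (by simp [Fin.ext_iff]),
    Finset.sum_insert (by simp [Fin.ext_iff]), Finset.sum_singleton]
  ring

lemma card_pend {m : ℕ} (hm : 6 ≤ m) :
    (Finset.univ.filter (fun u : Fin (m-1) => ¬ u.val < 5)).card = m - 6 := by
  have hn : 5 ≤ m - 1 := by omega
  rw [Finset.card_filter]
  rw [Fin.sum_univ_eq_sum_range (fun i => if ¬ i < 5 then 1 else 0) (m-1)]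
  rw [Finset.range_eq_Ico, ← Finset.sum_Ico_consecutive _ (Nat.zero_le 5) hn]
  have h1 : (∑ i ∈ Finset.Ico 0 5, if ¬ i < 5 then (1:ℕ) else 0) = 0 :=
    Finset.sum_eq_zero (fun i hi => if_neg (not_not_intro (by
      simp only [Finset.mem_Ico] at hi; omega)))
  have h2 : (∑ i ∈ Finset.Ico 5 (m-1), if ¬ i < 5 then (1:ℕ) else 0) = m - 6 := by
    rw [Finset.sum_congr rfl (fun i hi => if_pos (by
      simp only [Finset.mem_Ico] at hi; omega)), Finset.sum_const, Nat.card_Ico,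
      smul_eq_mul, mul_one]
    omega
  rw [h1, h2, zero_add]

lemma card_pend_cast {m : ℕ} (hm : 6 ≤ m) :
    ((Finset.univ.filter (fun u : Fin (m-1) => ¬ u.val < 5)).card : ℝ) = (m:ℝ) - 6 := by
  rw [card_pend hm, Nat.cast_sub hm]
  norm_num

/-- the eigenvector for the Q-index of B₂ -/
noncomputable def eigvec (m : ℕ) (μ : ℝ) : Fin (m-1) → ℝ := fun u =>
  if u.val = 0 then (μ-3)*(μ-1) else if u.val < 5 then (μ-1) else (μ-3)

lemma eigvec_zero {m : ℕ} (μ : ℝ) {u : Fin (m-1)} (h : u.val = 0) :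
    eigvec m μ u = (μ-3)*(μ-1) := by simp [eigvec, h]

lemma eigvec_mid {m : ℕ} (μ : ℝ) {u : Fin (m-1)} (h0 : u.val ≠ 0) (h5 : u.val < 5) :
    eigvec m μ u = (μ-1) := by simp [eigvec, h0, h5]

lemma eigvec_pend {m : ℕ} (μ : ℝ) {u : Fin (m-1)} (h : ¬ u.val < 5) :
    eigvec m μ u = (μ-3) := by
  rw [eigvec, if_neg (by omega), if_neg h]

lemma eigvec_sum {m : ℕ} (hm : 6 ≤ m) (μ : ℝ) :
    ∑ u, eigvec m μ u = (μ-3)*(μ-1) + 4*(μ-1) + ((m:ℝ)-6)*(μ-3) := by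
  rw [sum_decomp hm (eigvec m μ), eigvec_zero μ rfl, eigvec_mid μ (by simp) (by simp),
    eigvec_mid μ (by simp) (by simp), eigvec_mid μ (by simp) (by simp),
    eigvec_mid μ (by simp) (by simp),
    Finset.sum_congr rfl (fun u hu => eigvec_pend μ (Finset.mem_filter.mp hu).2),
    Finset.sum_const, nsmul_eq_mul, card_pend_cast hm]
  ring

lemma vtx_ne {m : ℕ} {j k : ℕ} (hj : j < m - 1) (hk : k < m - 1) (h : j ≠ k) :
    vtx m j hj ≠ vtx m k hk := by
  simp [Fin.ext_iff, h]

lemma B2_eigen (m : ℕ) (hm : 6 ≤ m) (μ : ℝ)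
    (hμroot : μ ^ 3 - ((m : ℝ) + 2) * μ ^ 2 + (3 * (m : ℝ) - 3) * μ - 8 = 0) :
    (signlessLaplacian (graphB2 m)).mulVec (eigvec m μ) = μ • (eigvec m μ) := by
  classical
  have hcast1 : ((m - 1 : ℕ) : ℝ) = (m:ℝ) - 1 := by
    rw [Nat.cast_sub (by omega)]; norm_num
  funext v
  rw [sl_mulVec]
  simp only [Pi.smul_apply, smul_eq_mul]
  have hcases : v.val = 0 ∨ v.val = 1 ∨ v.val = 2 ∨ v.val = 3 ∨ v.val = 4 ∨ ¬ v.val < 5 := by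
    omega
  rcases hcases with h|h|h|h|h|h
  · have hv : v = vtx m 0 (by omega) := Fin.ext h
    rw [hv]
    simp only [adj0 hm]
    rw [sum_ite_ne, Finset.sum_add_distrib, Finset.sum_const, Finset.card_univ,
      Fintype.card_fin, nsmul_eq_mul, hcast1, eigvec_sum hm, eigvec_zero μ rfl]
    linear_combination -hμroot
  · have hv : v = vtx m 1 (by omega) := Fin.ext h
    rw [hv]
    simp only [adj1 hm]
    rw [sum_ite_pair (vtx_ne _ _ (by norm_num)),
      eigvec_zero μ (u := vtx m 0 (by omega)) rfl,
      eigvec_mid μ (by simp) (by simp)]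
    rw [eigvec_mid μ (u := vtx m 2 (by omega)) (by simp) (by simp)]
    ring
  · have hv : v = vtx m 2 (by omega) := Fin.ext h
    rw [hv]
    simp only [adj2 hm]
    rw [sum_ite_pair (vtx_ne _ _ (by norm_num)),
      eigvec_zero μ (u := vtx m 0 (by omega)) rfl,
      eigvec_mid μ (u := vtx m 2 (by omega)) (by simp) (by simp)]
    rw [eigvec_mid μ (u := vtx m 1 (by omega)) (by simp) (by simp)]
    ring
  · have hv : v = vtx m 3 (by omega) := Fin.ext h
    rw [hv]
    simp only [adj3 hm]
    rw [sum_ite_pair (vtx_ne _ _ (by norm_num)),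
      eigvec_zero μ (u := vtx m 0 (by omega)) rfl,
      eigvec_mid μ (u := vtx m 3 (by omega)) (by simp) (by simp)]
    rw [eigvec_mid μ (u := vtx m 4 (by omega)) (by simp) (by simp)]
    ring
  · have hv : v = vtx m 4 (by omega) := Fin.ext h
    rw [hv]
    simp only [adj4 hm]
    rw [sum_ite_pair (vtx_ne _ _ (by norm_num)),
      eigvec_zero μ (u := vtx m 0 (by omega)) rfl,
      eigvec_mid μ (u := vtx m 4 (by omega)) (by simp) (by simp)]
    rw [eigvec_mid μ (u := vtx m 3 (by omega)) (by simp) (by simp)]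
    ring
  · simp only [adjP hm v h]
    rw [sum_ite_single, eigvec_pend μ h, eigvec_zero μ rfl]
    ring

lemma B2_bound (m : ℕ) (hm : 6 ≤ m) (ν : ℝ) (x : Fin (m-1) → ℝ) (hx0 : x ≠ 0)
    (hxQ : (signlessLaplacian (graphB2 m)).mulVec x = ν • x) :
    ν = 1 ∨ ν = 3 ∨ ν ^ 3 - ((m : ℝ) + 2) * ν ^ 2 + (3 * (m : ℝ) - 3) * ν - 8 = 0 := by
  classical
  have hcast1 : ((m - 1 : ℕ) : ℝ) = (m:ℝ) - 1 := by
    rw [Nat.cast_sub (by omega)]; norm_num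
  have heq : ∀ v, (∑ u, if (graphB2 m).Adj v u then x v + x u else 0) = ν * x v := by
    intro v
    rw [← sl_mulVec, hxQ]
    simp
  have e1 : (x (vtx m 1 (by omega)) + x (vtx m 0 (by omega)))
      + (x (vtx m 1 (by omega)) + x (vtx m 2 (by omega))) = ν * x (vtx m 1 (by omega)) := by
    have h := heq (vtx m 1 (by omega))
    simp only [adj1 hm] at h
    rwa [sum_ite_pair (vtx_ne _ _ (by norm_num))] at h
  have e2 : (x (vtx m 2 (by omega)) + x (vtx m 0 (by omega)))
      + (x (vtx m 2 (by omega)) + x (vtx m 1 (by omega))) = ν * x (vtx m 2 (by omega)) := by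
    have h := heq (vtx m 2 (by omega))
    simp only [adj2 hm] at h
    rwa [sum_ite_pair (vtx_ne _ _ (by norm_num))] at h
  have e3 : (x (vtx m 3 (by omega)) + x (vtx m 0 (by omega)))
      + (x (vtx m 3 (by omega)) + x (vtx m 4 (by omega))) = ν * x (vtx m 3 (by omega)) := by
    have h := heq (vtx m 3 (by omega))
    simp only [adj3 hm] at h
    rwa [sum_ite_pair (vtx_ne _ _ (by norm_num))] at h
  have e4 : (x (vtx m 4 (by omega)) + x (vtx m 0 (by omega)))
      + (x (vtx m 4 (by omega)) + x (vtx m 3 (by omega))) = ν * x (vtx m 4 (by omega)) := by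
    have h := heq (vtx m 4 (by omega))
    simp only [adj4 hm] at h
    rwa [sum_ite_pair (vtx_ne _ _ (by norm_num))] at h
  have ep : ∀ u : Fin (m-1), ¬ u.val < 5 → x u + x (vtx m 0 (by omega)) = ν * x u := by
    intro u hu
    have h := heq u
    simp only [adjP hm u hu] at h
    rwa [sum_ite_single] at h
  have e0 : ((m:ℝ)-1) * x (vtx m 0 (by omega)) + (∑ u, x u) - 2 * x (vtx m 0 (by omega))
      = ν * x (vtx m 0 (by omega)) := by
    have h := heq (vtx m 0 (by omega))
    simp only [adj0 hm] at h
    rw [sum_ite_ne, Finset.sum_add_distrib, Finset.sum_const, Finset.card_univ,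
      Fintype.card_fin, nsmul_eq_mul, hcast1] at h
    linarith
  have hsumd := sum_decomp hm x
  set P : ℝ := ∑ u ∈ Finset.univ.filter (fun u : Fin (m-1) => ¬ u.val < 5), x u with hPdef
  have hP : (ν - 1) * P = ((m:ℝ) - 6) * x (vtx m 0 (by omega)) := by
    rw [hPdef, Finset.mul_sum,
      Finset.sum_congr rfl (fun u hu => show (ν - 1) * x u = x (vtx m 0 (by omega)) by
        have h := ep u (Finset.mem_filter.mp hu).2
        linarith),
      Finset.sum_const, nsmul_eq_mul, card_pend_cast hm]
  by_cases ha : x (vtx m 0 (by omega)) = 0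
  · -- a zero hub entry: eigenvalue is 1 or 3
    obtain ⟨u, hu⟩ : ∃ u, x u ≠ 0 := Function.ne_iff.mp hx0
    have pairCase : ∀ y z : ℝ, 2*y + z = ν*y → 2*z + y = ν*z → (y ≠ 0 ∨ z ≠ 0) →
        ν = 1 ∨ ν = 3 := by
      intro y z h1 h2 hyz
      by_cases hyzeq : y = z
      · subst hyzeq
        have hy : y ≠ 0 := by tauto
        right
        have h3 : 3 * y = ν * y := by linarith
        exact (mul_right_cancel₀ hy (by linarith [h3])).symm
      · left
        have h1' : (ν - 1) * (y - z) = 0 := by linarith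
        rcases mul_eq_zero.mp h1' with h|h
        · linarith
        · exact absurd (by linarith : y = z) hyzeq
    by_cases hvu : u.val < 5
    · have h5 : u.val = 0 ∨ u.val = 1 ∨ u.val = 2 ∨ u.val = 3 ∨ u.val = 4 := by omega
      rcases h5 with h'|h'|h'|h'|h'
      · exact absurd (by rw [show u = vtx m 0 (by omega) from Fin.ext h']; exact ha) hu
      · rcases pairCase (x (vtx m 1 (by omega))) (x (vtx m 2 (by omega)))
          (by rw [ha] at e1; linarith) (by rw [ha] at e2; linarith)
          (Or.inl (by rwa [show u = vtx m 1 (by omega) from Fin.ext h'] at hu)) with h|h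
        · exact Or.inl h
        · exact Or.inr (Or.inl h)
      · rcases pairCase (x (vtx m 1 (by omega))) (x (vtx m 2 (by omega)))
          (by rw [ha] at e1; linarith) (by rw [ha] at e2; linarith)
          (Or.inr (by rwa [show u = vtx m 2 (by omega) from Fin.ext h'] at hu)) with h|h
        · exact Or.inl h
        · exact Or.inr (Or.inl h)
      · rcases pairCase (x (vtx m 3 (by omega))) (x (vtx m 4 (by omega)))
          (by rw [ha] at e3; linarith) (by rw [ha] at e4; linarith)
          (Or.inl (by rwa [show u = vtx m 3 (by omega) from Fin.ext h'] at hu)) with h|h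
        · exact Or.inl h
        · exact Or.inr (Or.inl h)
      · rcases pairCase (x (vtx m 3 (by omega))) (x (vtx m 4 (by omega)))
          (by rw [ha] at e3; linarith) (by rw [ha] at e4; linarith)
          (Or.inr (by rwa [show u = vtx m 4 (by omega) from Fin.ext h'] at hu)) with h|h
        · exact Or.inl h
        · exact Or.inr (Or.inl h)
    · -- pendant coordinate nonzero : ν = 1
      have h := ep u hvu
      rw [ha] at h
      left
      have h' : (ν - 1) * x u = 0 := by linarith
      rcases mul_eq_zero.mp h' with h''|h''
      · linarith
      · exact absurd h'' hu
  · -- nonzero hub entry : ν is a root of the cubic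
    right; right
    have hs1 : (ν - 3) * (x (vtx m 1 (by omega)) + x (vtx m 2 (by omega)))
        = 2 * x (vtx m 0 (by omega)) := by linarith
    have hs2 : (ν - 3) * (x (vtx m 3 (by omega)) + x (vtx m 4 (by omega)))
        = 2 * x (vtx m 0 (by omega)) := by linarith
    have he0 : ((m:ℝ)-2) * x (vtx m 0 (by omega)) +
        ((x (vtx m 1 (by omega)) + x (vtx m 2 (by omega))) +
         (x (vtx m 3 (by omega)) + x (vtx m 4 (by omega))) + P) = ν * x (vtx m 0 (by omega)) := by
      rw [hsumd] at e0
      linarith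
    have key : x (vtx m 0 (by omega)) *
        (ν ^ 3 - ((m : ℝ) + 2) * ν ^ 2 + (3 * (m : ℝ) - 3) * ν - 8) = 0 := by
      linear_combination (-(ν-1)*(ν-3)) * he0 + (ν-1) * hs1 + (ν-1) * hs2 + (ν-3) * hP
    rcases mul_eq_zero.mp key with h|h
    · exact absurd h ha
    · exact h

/-- From the proof of Theorem 1.3: for `m ≥ 6`, the `Q`-index of `B_2` is the largest
real root of `φ(x) = x³ - (m+2) x² + (3m-3) x - 8`. -/
theorem qIndex_B2_largest_root (m : ℕ) (hm : 6 ≤ m) :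
    IsGreatest {x : ℝ | x ^ 3 - ((m : ℝ) + 2) * x ^ 2 + (3 * (m : ℝ) - 3) * x - 8 = 0}
      (qIndex (graphB2 m)) := by
  classical
  have hmR : (6:ℝ) ≤ (m:ℝ) := by exact_mod_cast hm
  set R : Set ℝ := {x : ℝ | x ^ 3 - ((m : ℝ) + 2) * x ^ 2 + (3 * (m : ℝ) - 3) * x - 8 = 0}
    with hR
  have hRfin : R.Finite := by
    have hEq : R = {x : ℝ | (Polynomial.X ^ 3 - Polynomial.C ((m:ℝ)+2) * Polynomial.X ^ 2
        + Polynomial.C (3*(m:ℝ)-3) * Polynomial.X - Polynomial.C 8).IsRoot x} := by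
      ext x; simp [Polynomial.IsRoot, hR]
    rw [hEq]
    apply Polynomial.finite_setOf_isRoot
    have hdeg : (Polynomial.X ^ 3 - Polynomial.C ((m:ℝ)+2) * Polynomial.X ^ 2
        + Polynomial.C (3*(m:ℝ)-3) * Polynomial.X - Polynomial.C 8).natDegree = 3 := by
      compute_degree!
    intro hcon
    rw [hcon] at hdeg
    simp at hdeg
  obtain ⟨c, hc, hfc⟩ : ∃ c ∈ Set.Icc (3:ℝ) (m:ℝ),
      c ^ 3 - ((m : ℝ) + 2) * c ^ 2 + (3 * (m : ℝ) - 3) * c - 8 = 0 := by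
    have h3m : (3:ℝ) ≤ (m:ℝ) := by linarith
    have hcont : ContinuousOn
        (fun x : ℝ => x ^ 3 - ((m : ℝ) + 2) * x ^ 2 + (3 * (m : ℝ) - 3) * x - 8)
        (Set.Icc 3 (m:ℝ)) := by fun_prop
    have h := intermediate_value_Icc h3m hcont
    have h0 : (0:ℝ) ∈ Set.Icc ((3:ℝ) ^ 3 - ((m : ℝ) + 2) * 3 ^ 2 + (3 * (m : ℝ) - 3) * 3 - 8)
        ((m:ℝ) ^ 3 - ((m : ℝ) + 2) * (m:ℝ) ^ 2 + (3 * (m : ℝ) - 3) * (m:ℝ) - 8) := by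
      constructor
      · nlinarith
      · nlinarith
    obtain ⟨c, hc, hfc⟩ := h h0
    exact ⟨c, hc, hfc⟩
  have hcR : c ∈ R := hfc
  have hRne : R.Nonempty := ⟨c, hcR⟩
  set μ : ℝ := sSup R with hμdef
  have hgreat : IsGreatest R μ :=
    ⟨hRne.csSup_mem hRfin, fun x hx => le_csSup hRfin.bddAbove hx⟩
  have hμroot : μ ^ 3 - ((m : ℝ) + 2) * μ ^ 2 + (3 * (m : ℝ) - 3) * μ - 8 = 0 := hgreat.1
  have hc3 : 3 < c := by
    rcases lt_or_eq_of_le hc.1 with h | h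
    · exact h
    · exfalso; rw [← h] at hfc; nlinarith
  have hμ3 : 3 < μ := lt_of_lt_of_le hc3 (hgreat.2 hcR)
  have hmem : μ ∈ {ν : ℝ | ∃ x : Fin (m-1) → ℝ, x ≠ 0 ∧
      (signlessLaplacian (graphB2 m)).mulVec x = ν • x} := by
    refine ⟨eigvec m μ, ?_, B2_eigen m hm μ hμroot⟩
    intro hcon
    have h := congrFun hcon (vtx m 1 (by omega))
    rw [eigvec_mid μ (by simp) (by simp)] at h
    simp only [Pi.zero_apply] at h
    linarith
  have hub : ∀ ν ∈ {ν : ℝ | ∃ x : Fin (m-1) → ℝ, x ≠ 0 ∧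
      (signlessLaplacian (graphB2 m)).mulVec x = ν • x}, ν ≤ μ := by
    rintro ν ⟨x, hx0, hxQ⟩
    rcases B2_bound m hm ν x hx0 hxQ with h|h|h
    · linarith
    · linarith
    · exact hgreat.2 h
  have hq : qIndex (graphB2 m) = sSup {ν : ℝ | ∃ x : Fin (m-1) → ℝ, x ≠ 0 ∧
      (signlessLaplacian (graphB2 m)).mulVec x = ν • x} := rfl
  have hSgreat : IsGreatest {ν : ℝ | ∃ x : Fin (m-1) → ℝ, x ≠ 0 ∧
      (signlessLaplacian (graphB2 m)).mulVec x = ν • x} μ := ⟨hmem, hub⟩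
  rw [hq, hSgreat.csSup_eq]
  exact hgreat
end
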